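/- arXiv:0809.0325 — 9 statements merged into one kernel-verified Lean document; each statement's English description precedes it below -/
import Mathlib

section
/- Let E be a nonzero Banach space, h : E × E* → (−∞,∞] proper and convex with h(x,x*) ≥ ⟨x,x*⟩ for all (x,x*), and suppose h*(x*,x**) ≥ ⟨x*,x**⟩ for all (x*,x**) ∈ E* × E**. Then the lower semicontinuous hull h̄ is a strongly representative function, i.e., h̄ is proper convex lower semicontinuous, h̄(x,x*) ≥ ⟨x,x*⟩ for all (x,x*), and h̄*(x*,x**) ≥ ⟨x*,x**⟩ for all (x*,x**). -/
/-! The epigraph of `h̄` is the closure of the epigraph of `h`, so `h̄` inherits convexity and is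
lower semicontinuous, and `h̄ ≤ h`, whence `h̄* ≥ h* ≥ ⟨x*, x**⟩`. Since the coupling `⟨x, x*⟩` is
continuous, its epigraph is closed and contains that of `h`, hence that of `h̄`; this gives
`h̄ ≥ ⟨x, x*⟩`, and with it properness of `h̄`. -/

open NormedSpace Set
open scoped Classical

noncomputable section

/-- Convexity for `EReal`-valued functions. -/
def EConvexOn {G : Type*} [AddCommGroup G] [Module ℝ G] (f : G → EReal) : Prop :=
  ∀ x y : G, ∀ a b : ℝ, 0 ≤ a → 0 ≤ b → a + b = 1 →
    f (a • x + b • y) ≤ (a : EReal) * f x + (b : EReal) * f y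

/-- Proper: somewhere finite, never `⊥`. -/
def ProperFun {G : Type*} (f : G → EReal) : Prop := (∃ x, f x ≠ ⊤) ∧ ∀ x, f x ≠ ⊥

/-- Fenchel conjugate of a function on a product of two normed spaces, with respect to the
pairing `⟨(x,u),(xs,us)⟩ = xs x + us u`. -/
def conj2 {E F : Type*} [NormedAddCommGroup E] [NormedSpace ℝ E]
    [NormedAddCommGroup F] [NormedSpace ℝ F]
    (f : E × F → EReal) (p : StrongDual ℝ E × StrongDual ℝ F) : EReal :=
  ⨆ q : E × F, ((p.1 q.1 + p.2 q.2 : ℝ) : EReal) - f q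

/-- A representative function on `E × E*`. -/
def IsRep {E : Type*} [NormedAddCommGroup E] [NormedSpace ℝ E]
    (f : E × StrongDual ℝ E → EReal) : Prop :=
  ProperFun f ∧ EConvexOn f ∧ LowerSemicontinuous f ∧
    ∀ p : E × StrongDual ℝ E, ((p.2 p.1 : ℝ) : EReal) ≤ f p

/-- A strongly representative function on `E × E*`. -/
def IsStrongRep {E : Type*} [NormedAddCommGroup E] [NormedSpace ℝ E]
    (f : E × StrongDual ℝ E → EReal) : Prop :=
  IsRep f ∧ ∀ p : StrongDual ℝ E × StrongDual ℝ (StrongDual ℝ E), ((p.2 p.1 : ℝ) : EReal) ≤ conj2 f p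

/-- The monotone multifunction associated to a representative function. -/
def Mgraph {E : Type*} [NormedAddCommGroup E] [NormedSpace ℝ E]
    (f : E × StrongDual ℝ E → EReal) (x : E) : Set (StrongDual ℝ E) :=
  {xs | f (x, xs) = ((xs x : ℝ) : EReal)}

/-- Monotone multifunction. -/
def MonoMF {E : Type*} [NormedAddCommGroup E] [NormedSpace ℝ E]
    (S : E → Set (StrongDual ℝ E)) : Prop :=
  ∀ x y : E, ∀ xs ys : StrongDual ℝ E, xs ∈ S x → ys ∈ S y → 0 ≤ (xs - ys) (x - y)

/-- Maximally monotone multifunction. -/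
def MaxMonoMF {E : Type*} [NormedAddCommGroup E] [NormedSpace ℝ E]
    (S : E → Set (StrongDual ℝ E)) : Prop :=
  MonoMF S ∧ ∀ x : E, ∀ xs : StrongDual ℝ E,
    (∀ s : E, ∀ ss : StrongDual ℝ E, ss ∈ S s → 0 ≤ (xs - ss) (x - s)) → xs ∈ S x

/-- The function `h_{K,ys}` of Example 6. -/
def hfun {E : Type*} [NormedAddCommGroup E] [NormedSpace ℝ E]
    (K : Set E) (ys : StrongDual ℝ E) (p : E × StrongDual ℝ E) : EReal :=
  (if p.1 ∈ K then (0 : EReal) else ⊤) + ((ys p.1 : ℝ) : EReal)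
    + ((sSup ((fun k : E => (p.2 - ys) k) '' K) : ℝ) : EReal)

/-- The function `g_{y,K}` of Example 7. -/
def gfun {E : Type*} [NormedAddCommGroup E] [NormedSpace ℝ E]
    (y : E) (K : Set (StrongDual ℝ E)) (p : E × StrongDual ℝ E) : EReal :=
  ((sSup ((fun k : StrongDual ℝ E => k (p.1 - y)) '' K) : ℝ) : EReal)
    + (if p.2 ∈ K then (0 : EReal) else ⊤) + ((p.2 y : ℝ) : EReal)

/-- Parallel sum of multifunctions. -/
def parSum {E : Type*} [NormedAddCommGroup E] [NormedSpace ℝ E]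
    (S T : E → Set (StrongDual ℝ E)) (x : E) : Set (StrongDual ℝ E) :=
  {xs | ∃ v : E, xs ∈ S (x - v) ∧ xs ∈ T v}

section Epigraph

variable {X : Type*}

def realEpigraph (f : X → EReal) : Set (X × ℝ) := {p | f p.1 ≤ (p.2 : EReal)}

theorem realEpigraph_subset_iff {f g : X → EReal} :
    realEpigraph g ⊆ realEpigraph f ↔ f ≤ g := by
  refine ⟨fun hsub x => EReal.le_of_forall_lt_iff_le.1 fun t ht => hsub (a := (x, t)) ht.le,
    fun hfg p hp => (hfg p.1).trans hp⟩

theorem isClosed_realEpigraph_coe [TopologicalSpace X] {g : X → ℝ} (hg : Continuous g) :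
    IsClosed (realEpigraph fun x => (g x : EReal)) := by
  simp only [realEpigraph, EReal.coe_le_coe_iff]
  exact isClosed_le (hg.comp continuous_fst) continuous_snd

theorem lowerSemicontinuous_of_isClosed_realEpigraph [TopologicalSpace X] {f : X → EReal}
    (hf : IsClosed (realEpigraph f)) : LowerSemicontinuous f := by
  intro x y hy
  obtain ⟨r, hyr, hrf⟩ := EReal.lt_iff_exists_real_btwn.1 hy
  have hopen : IsOpen {x' | ¬f x' ≤ r} :=
    hf.isOpen_compl.preimage (continuous_id.prodMk continuous_const)
  filter_upwards [hopen.mem_nhds hrf.not_ge] with x' hx' using hyr.trans (not_le.1 hx')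

end Epigraph

section Convexity

variable {G : Type*} [AddCommGroup G] [Module ℝ G] {f : G → EReal}

theorem EConvexOn.convex_realEpigraph (hf : EConvexOn f) : Convex ℝ (realEpigraph f) := by
  rintro ⟨x, s⟩ hx ⟨y, t⟩ hy a b ha hb hab
  have hbound : f (a • x + b • y) ≤ ((a * s + b * t : ℝ) : EReal) :=
    calc f (a • x + b • y) ≤ (a : EReal) * f x + (b : EReal) * f y := hf x y a b ha hb hab
      _ ≤ (a : EReal) * s + (b : EReal) * t :=
        add_le_add (mul_le_mul_of_nonneg_left hx (EReal.coe_nonneg.2 ha))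
          (mul_le_mul_of_nonneg_left hy (EReal.coe_nonneg.2 hb))
      _ = ((a * s + b * t : ℝ) : EReal) := by norm_cast
  simpa [realEpigraph] using hbound

theorem econvexOn_of_convex_realEpigraph (hbot : ∀ x, f x ≠ ⊥)
    (hf : Convex ℝ (realEpigraph f)) : EConvexOn f := by
  have hmul : ∀ {a : ℝ}, 0 ≤ a → ∀ x, (a : EReal) * f x ≠ ⊥ := fun {a} ha x =>
    (EReal.mul_ne_bot _ _).2 ⟨.inl (EReal.coe_ne_bot a), .inr (hbot x),
      .inl (EReal.coe_ne_top a), .inl (EReal.coe_nonneg.2 ha)⟩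
  intro x y a b ha hb hab
  rcases ha.eq_or_lt with rfl | ha'
  · obtain rfl : b = 1 := by linarith
    simp
  rcases hb.eq_or_lt with rfl | hb'
  · obtain rfl : a = 1 := by linarith
    simp
  by_cases hxT : f x = ⊤
  · rw [hxT, EReal.mul_top_of_pos (EReal.coe_pos.2 ha'), EReal.top_add_of_ne_bot (hmul hb y)]
    exact le_top
  by_cases hyT : f y = ⊤
  · rw [hyT, EReal.mul_top_of_pos (EReal.coe_pos.2 hb'), EReal.add_top_of_ne_bot (hmul ha x)]
    exact le_top
  lift f x to ℝ using ⟨hxT, hbot x⟩ with s hs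
  lift f y to ℝ using ⟨hyT, hbot y⟩ with t ht
  have hmem := hf (x := (x, s)) (y := (y, t)) hs.ge ht.ge ha hb hab
  simp only [realEpigraph, Set.mem_ofPred_eq, Prod.smul_mk, Prod.mk_add_mk, smul_eq_mul] at hmem
  exact hmem.trans_eq (by norm_cast)

end Convexity

theorem conj2_anti {E F : Type*} [NormedAddCommGroup E] [NormedSpace ℝ E]
    [NormedAddCommGroup F] [NormedSpace ℝ F] {f g : E × F → EReal} (hfg : f ≤ g) :
    conj2 g ≤ conj2 f :=
  fun _ => iSup_mono fun q => EReal.sub_le_sub le_rfl (hfg q)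

theorem stmt2_general {E : Type*} [NormedAddCommGroup E] [NormedSpace ℝ E]
    (h hbar : E × StrongDual ℝ E → EReal) (hp : ProperFun h) (hc : EConvexOn h)
    (hge : ∀ p : E × StrongDual ℝ E, ((p.2 p.1 : ℝ) : EReal) ≤ h p)
    (hcge : ∀ p : StrongDual ℝ E × StrongDual ℝ (StrongDual ℝ E), ((p.2 p.1 : ℝ) : EReal) ≤ conj2 h p)
    (hepi : {p : (E × StrongDual ℝ E) × ℝ | hbar p.1 ≤ (p.2 : EReal)} =
      closure {p : (E × StrongDual ℝ E) × ℝ | h p.1 ≤ (p.2 : EReal)}) :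
    IsStrongRep hbar := by
  change realEpigraph hbar = closure (realEpigraph h) at hepi
  have hle : hbar ≤ h := realEpigraph_subset_iff.1 (hepi ▸ subset_closure)
  have hpairing : (fun p : E × StrongDual ℝ E => ((p.2 p.1 : ℝ) : EReal)) ≤ hbar := by
    refine realEpigraph_subset_iff.1 (hepi ▸ closure_minimal (realEpigraph_subset_iff.2 hge) ?_)
    exact isClosed_realEpigraph_coe (continuous_snd.clm_apply continuous_fst)
  have hbot : ∀ p, hbar p ≠ ⊥ := fun p => ne_bot_of_le_ne_bot (EReal.coe_ne_bot _) (hpairing p)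
  obtain ⟨p₀, hp₀⟩ := hp.1
  refine ⟨⟨⟨⟨p₀, ne_top_of_le_ne_top hp₀ (hle p₀)⟩, hbot⟩, ?_, ?_, hpairing⟩,
    fun p => (hcge p).trans (conj2_anti hle p)⟩
  · exact econvexOn_of_convex_realEpigraph hbot (hepi ▸ hc.convex_realEpigraph.closure)
  · exact lowerSemicontinuous_of_isClosed_realEpigraph (hepi ▸ isClosed_closure)

theorem stmt2 {E : Type*} [NormedAddCommGroup E] [NormedSpace ℝ E] [CompleteSpace E] [Nontrivial E]
    (h hbar : E × StrongDual ℝ E → EReal) (hp : ProperFun h) (hc : EConvexOn h)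
    (hge : ∀ p : E × StrongDual ℝ E, ((p.2 p.1 : ℝ) : EReal) ≤ h p)
    (hcge : ∀ p : StrongDual ℝ E × StrongDual ℝ (StrongDual ℝ E), ((p.2 p.1 : ℝ) : EReal) ≤ conj2 h p)
    (hepi : {p : (E × StrongDual ℝ E) × ℝ | hbar p.1 ≤ (p.2 : EReal)} =
      closure {p : (E × StrongDual ℝ E) × ℝ | h p.1 ≤ (p.2 : EReal)}) :
    IsStrongRep hbar :=
  stmt2_general h hbar hp hc hge hcge hepi
end
end

section
/- Let E and F be nonzero Banach spaces, f, g proper convex lsc on E × F, with ⋃_{λ>0} λ[π_E dom g − π_E dom f] a closed subspace of E. For all (x,y) ∈ E × F let h(x,y) := inf{ f(x, y − v) + g(x, v) : v ∈ F } and assume h > −∞ everywhere. Then for all (x*,u*) ∈ E* × F*, h*(x*,u*) = min{ f*(x* − y*, u*) + g*(y*, u*) : y* ∈ E* }, with the minimum attained. -/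
open NormedSpace Set
open scoped Classical

noncomputable section

/-!
Weak duality `h* ≤ f*(x* - y*, u*) + g*(y*, u*)` is the Fenchel–Young inequality applied to
each splitting `y = (y - v) + v`. For the converse and its attainment, write points of
`(E × F)²` as pairs `(a, b)` and put `Φ (a, b) = f a + g b`, `L (a, b) = b.1 - a.1` and
`ℓ (a, b) = x* a.1 + u* a.2 + u* b.2`. If `h*(x*, u*) = A` is finite, then `ℓ - A ≤ Φ` on
`ker L`, and `y*` is a minimiser as soon as `ℓ + y* ∘ L - A ≤ Φ` everywhere.

Such a multiplier comes from the Attouch–Brezis argument. After restricting to `L⁻¹ M`, the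
cone hypothesis says that `L (dom Φ)` is absorbing in `M`, so by Baire's theorem the closure of
the image of some bounded sublevel set `{w | ‖w‖ ≤ N ∧ Φ w ≤ N + ℓ w}` is a neighbourhood of `0`.
Successive approximation, using completeness and the lower semicontinuity of `Φ`, removes the
closure. Hence `(0, N + 1)` is an interior point of the convex set `{(L w, t) | Φ w ≤ t + ℓ w}`,
which contains no `(0, t)` with `t < -A`; a hyperplane separating it from `(0, -A)` is not
vertical, and its slope is `y*`.
-/

open Filter Topology Metric
open scoped Pointwise

namespace EReal

lemma coe_sub_le_coe_iff {c A : ℝ} {X : EReal} :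
    (c : EReal) - X ≤ A ↔ ((c - A : ℝ) : EReal) ≤ X := by
  induction X with
  | bot => exact iff_of_false (by simp) (by simpa using coe_ne_bot (c - A))
  | top => simp
  | coe x =>
    norm_cast
    constructor <;> intro <;> linarith

lemma coe_add_sub_add {c d : ℝ} {X Y : EReal} (hX : X ≠ ⊥) (hY : Y ≠ ⊥) :
    ((c + d : ℝ) : EReal) - (X + Y) = ((c : EReal) - X) + ((d : EReal) - Y) := by
  rw [sub_eq_add_neg, sub_eq_add_neg, sub_eq_add_neg, neg_add (.inl hX) (.inr hY),
    coe_add, add_add_add_comm, sub_eq_add_neg]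

lemma sub_iInf_le {ι : Sort*} {c R : EReal} {F : ι → EReal} (h : ∀ i, c - F i ≤ R) :
    c - ⨅ i, F i ≤ R := by
  rw [sub_eq_add_neg, show -⨅ i, F i = ⨆ i, -F i from negOrderIso.map_iInf F]
  refine add_le_of_forall_lt fun a ha b hb => ?_
  obtain ⟨i, hi⟩ := lt_iSup_iff.1 hb
  exact (add_le_add ha.le hi.le).trans (h i)

lemma iSup_add_iSup_le {ι κ : Sort*} {u : ι → EReal} {v : κ → EReal} {c : EReal}
    (h : ∀ i j, u i + v j ≤ c) : (⨆ i, u i) + ⨆ j, v j ≤ c := by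
  refine add_le_of_forall_lt fun a ha b hb => ?_
  obtain ⟨i, hi⟩ := lt_iSup_iff.1 ha
  obtain ⟨j, hj⟩ := lt_iSup_iff.1 hb
  exact (add_le_add hi.le hj.le).trans (h i j)

end EReal

lemma LowerSemicontinuous.ereal_add {α : Type*} [TopologicalSpace α] {f g : α → EReal}
    (hf : LowerSemicontinuous f) (hg : LowerSemicontinuous g) (hf' : ∀ x, f x ≠ ⊥)
    (hg' : ∀ x, g x ≠ ⊥) : LowerSemicontinuous fun x => f x + g x :=
  hf.add' hg fun x => EReal.continuousAt_add (.inr (hg' x)) (.inl (hf' x))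

namespace EConvexOn

variable {G H : Type*} [AddCommGroup G] [Module ℝ G] [AddCommGroup H] [Module ℝ H]

lemma add {f g : G → EReal} (hf : EConvexOn f) (hg : EConvexOn g) :
    EConvexOn fun x => f x + g x := by
  intro x y a b ha hb hab
  calc f (a • x + b • y) + g (a • x + b • y)
      ≤ (a * f x + b * f y) + (a * g x + b * g y) :=
        add_le_add (hf x y a b ha hb hab) (hg x y a b ha hb hab)
    _ = a * (f x + g x) + b * (f y + g y) := by
      rw [EReal.left_distrib_of_nonneg_of_ne_top (by exact_mod_cast ha) (EReal.coe_ne_top a),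
        EReal.left_distrib_of_nonneg_of_ne_top (by exact_mod_cast hb) (EReal.coe_ne_top b),
        add_add_add_comm]

lemma comp_linearMap {f : H → EReal} (hf : EConvexOn f) (φ : G →ₗ[ℝ] H) : EConvexOn (f ∘ φ) := by
  intro x y a b ha hb hab
  simpa only [Function.comp, map_add, map_smul] using hf (φ x) (φ y) a b ha hb hab

lemma combo_le {f : G → EReal} (hf : EConvexOn f) {x y : G} {a b s t : ℝ} (ha : 0 ≤ a)
    (hb : 0 ≤ b) (hab : a + b = 1) (hx : f x ≤ s) (hy : f y ≤ t) :
    f (a • x + b • y) ≤ ((a * s + b * t : ℝ) : EReal) :=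
  calc f (a • x + b • y) ≤ a * f x + b * f y := hf x y a b ha hb hab
    _ ≤ a * s + b * t := add_le_add (mul_le_mul_of_nonneg_left hx (by exact_mod_cast ha))
        (mul_le_mul_of_nonneg_left hy (by exact_mod_cast hb))
    _ = _ := by norm_cast

lemma combo_le_add {f : G → EReal} (hf : EConvexOn f) (ℓ : G →ₗ[ℝ] ℝ) {x y : G} {a b s t : ℝ}
    (ha : 0 ≤ a) (hb : 0 ≤ b) (hab : a + b = 1) (hx : f x ≤ ((s + ℓ x : ℝ) : EReal))
    (hy : f y ≤ ((t + ℓ y : ℝ) : EReal)) :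
    f (a • x + b • y) ≤ ((a * s + b * t + ℓ (a • x + b • y) : ℝ) : EReal) := by
  refine (hf.combo_le ha hb hab hx hy).trans_eq ?_
  congr 1
  simp only [map_add, map_smul, smul_eq_mul]
  ring

end EConvexOn

lemma Convex.mem_of_hasSum_smul {X : Type*} [NormedAddCommGroup X] [NormedSpace ℝ X]
    {C : Set X} (hC : Convex ℝ C) (hCc : IsClosed C) {a : ℕ → ℝ} {ω : ℕ → X} {w : X}
    (ha : ∀ k, 0 ≤ a k) (ha₁ : HasSum a 1) (hω : ∀ k, ω k ∈ C)
    (hw : HasSum (fun k => a k • ω k) w) : w ∈ C := by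
  by_contra hwC
  obtain ⟨φ, u, hφC, hφw⟩ := geometric_hahn_banach_closed_point hC hCc hwC
  have hφsum : HasSum (fun k => a k * φ (ω k)) (φ w) := by
    simpa using hw.mapL φ
  have hle : φ w ≤ 1 * u :=
    hasSum_le (fun k => mul_le_mul_of_nonneg_left (hφC _ (hω k)).le (ha k)) hφsum
      (ha₁.mul_right u)
  linarith

lemma exists_closure_mem_nhds_zero_of_convex_cover {Z : Type*} [NormedAddCommGroup Z]
    [NormedSpace ℝ Z] [CompleteSpace Z] {C : ℕ → Set Z} (hmono : Monotone C)
    (hconv : ∀ N, Convex ℝ (C N)) (hcov : ∀ z, ∃ n N : ℕ, z ∈ ((n : ℝ) + 1) • C N) :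
    ∃ N, closure (C N) ∈ 𝓝 0 := by
  have hpos : ∀ n : ℕ, ((n : ℝ) + 1) ≠ 0 := fun n => by positivity
  obtain ⟨⟨n, N⟩, z₁, hz₁⟩ :
      ∃ i : ℕ × ℕ, (interior (closure (((i.1 : ℝ) + 1) • C i.2))).Nonempty :=
    nonempty_interior_of_iUnion_of_closed (fun _ => isClosed_closure) <| eq_univ_of_forall
      fun z => let ⟨n, N, hz⟩ := hcov z; mem_iUnion.2 ⟨(n, N), subset_closure hz⟩
  rw [closure_smul₀' (hpos n), interior_smul₀ (hpos n)] at hz₁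
  obtain ⟨y, hy, -⟩ := hz₁
  obtain ⟨m, N', c, hc, hcy⟩ := hcov (-y)
  set K := max N N'
  have hyK : y ∈ interior (closure (C K)) :=
    interior_mono (closure_mono (hmono (le_max_left _ _))) hy
  have hcK : c ∈ closure (closure (C K)) :=
    subset_closure (subset_closure (hmono (le_max_right _ _) hc))
  have h0 := (hconv K).closure.combo_closure_interior_mem_interior hcK hyK
    (a := ((m : ℝ) + 1) / (m + 2)) (b := 1 / (m + 2)) (by positivity) (by positivity)
    (by field_simp; ring)
  -- `0` lies on the open segment from `c = -y / (m + 1)` to the interior point `y`.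
  obtain rfl : y = -(((m : ℝ) + 1) • c) := neg_eq_iff_eq_neg.1 hcy.symm
  refine ⟨K, mem_interior_iff_mem_nhds.1 ?_⟩
  convert h0 using 1
  field_simp
  module

lemma ball_subset_image_of_ball_subset_closure_image {X Z : Type*} [NormedAddCommGroup X]
    [NormedSpace ℝ X] [CompleteSpace X] [NormedAddCommGroup Z] [NormedSpace ℝ Z]
    (L : X →L[ℝ] Z) {C : Set X} (hC : Convex ℝ C) (hCc : IsClosed C)
    (hCb : Bornology.IsBounded C) {ρ : ℝ} (hρ : ball (0 : Z) ρ ⊆ closure (L '' C)) :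
    ball (0 : Z) (ρ / 2) ⊆ L '' C := by
  obtain ⟨R, hR⟩ := hCb.exists_norm_le
  have happrox : ∀ v ∈ ball (0 : Z) ρ, ∃ w ∈ C, ‖v - L w‖ < ρ / 2 := by
    intro v hv
    have hρ0 : 0 < ρ := (norm_nonneg v).trans_lt (mem_ball_zero_iff.1 hv)
    obtain ⟨_, ⟨w, hw, rfl⟩, hvw⟩ := Metric.mem_closure_iff.1 (hρ hv) (ρ / 2) (half_pos hρ0)
    exact ⟨w, hw, by rwa [← dist_eq_norm]⟩
  choose! step hstepC hstep using happrox
  intro z hz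
  -- The residuals `v (k + 1) = 2 (v k - L (ω k))` stay in the ball, so `z = L w` for the
  -- infinite convex combination `w = ∑ 2⁻¹ ^ (k + 1) • ω k` of points of `C`.
  let v : ℕ → Z := fun k => Nat.rec ((2 : ℝ) • z) (fun _ v => (2 : ℝ) • (v - L (step v))) k
  have hv : ∀ k, v k ∈ ball (0 : Z) ρ := by
    intro k
    induction k with
    | zero =>
      rw [mem_ball_zero_iff] at hz ⊢
      show ‖(2 : ℝ) • z‖ < ρ
      rw [norm_smul, Real.norm_two]
      linarith
    | succ k ih =>
      rw [mem_ball_zero_iff]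
      show ‖(2 : ℝ) • (v k - L (step (v k)))‖ < ρ
      rw [norm_smul, Real.norm_two]
      linarith [hstep _ ih]
  set ω : ℕ → X := fun k => step (v k)
  have htel : ∀ n, ∑ k ∈ Finset.range n, (2⁻¹ : ℝ) ^ (k + 1) • L (ω k)
      = z - (2⁻¹ : ℝ) ^ (n + 1) • v n := by
    intro n
    induction n with
    | zero => 
      show 0 = z - (2⁻¹ : ℝ) ^ 1 • (2 : ℝ) • z
      module
    | succ n ih =>
      rw [Finset.sum_range_succ, ih]
      show _ = z - (2⁻¹ : ℝ) ^ (n + 2) • (2 : ℝ) • (v n - L (ω n))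
      module
  have ha : HasSum (fun k : ℕ => (2⁻¹ : ℝ) ^ (k + 1)) 1 := by
    have := hasSum_geometric_two.mul_left (2⁻¹ : ℝ)
    rw [inv_mul_cancel₀ two_ne_zero] at this
    simpa [pow_succ', one_div] using this
  have hsum : Summable fun k => (2⁻¹ : ℝ) ^ (k + 1) • ω k :=
    Summable.of_norm_bounded (ha.summable.mul_right R) fun k => by
      rw [norm_smul, Real.norm_of_nonneg (by positivity)]
      exact mul_le_mul_of_nonneg_left (hR _ (hstepC _ (hv k))) (by positivity)
  refine ⟨_, hC.mem_of_hasSum_smul hCc (fun k => by positivity) ha (fun k => hstepC _ (hv k))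
    hsum.hasSum, ?_⟩
  refine tendsto_nhds_unique ((hsum.hasSum.mapL L).tendsto_sum_nat) ?_
  simp only [map_smul, htel]
  have hres : Tendsto (fun n => (2⁻¹ : ℝ) ^ (n + 1) • v n) atTop (𝓝 0) := by
    refine squeeze_zero_norm (a := fun n => (2⁻¹ : ℝ) ^ (n + 1) * ρ) (fun n => ?_)
      (by simpa using ha.summable.tendsto_atTop_zero.mul_const ρ)
    rw [norm_smul, Real.norm_of_nonneg (by positivity)]
    exact mul_le_mul_of_nonneg_left (mem_ball_zero_iff.1 (hv n)).le (by positivity)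
  simpa using tendsto_const_nhds.sub hres

lemma exists_le_add_of_convex_of_mem_interior {Z : Type*} [NormedAddCommGroup Z]
    [NormedSpace ℝ Z] {T : Set (Z × ℝ)} (hT : Convex ℝ T) {t₀ : ℝ}
    (ht₀ : ((0 : Z), t₀) ∈ interior T) {β : ℝ} (hβ : ∀ t, ((0 : Z), t) ∈ T → β ≤ t) :
    ∃ ys : StrongDual ℝ Z, ∀ p ∈ T, β ≤ p.2 + ys p.1 := by
  have hβT : ((0 : Z), β) ∉ interior T := by
    intro hβ'
    have hnhds : ∀ᶠ t in 𝓝 β, ((0 : Z), t) ∈ T :=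
      (Continuous.prodMk_right (0 : Z)).continuousAt.preimage_mem_nhds
        (mem_interior_iff_mem_nhds.1 hβ')
    obtain ⟨t, htT, htβ⟩ :=
      ((hnhds.filter_mono nhdsWithin_le_nhds).and (self_mem_nhdsWithin : Iio β ∈ 𝓝[<] β)).exists
    exact (hβ t htT).not_gt htβ
  obtain ⟨φ, hφ⟩ := geometric_hahn_banach_open_point hT.interior isOpen_interior hβT
  have hφT : ∀ p ∈ T, φ p ≤ φ (0, β) := by
    have hT' : T ⊆ closure (interior T) := by
      rw [hT.closure_interior_eq_closure_of_nonempty_interior ⟨_, ht₀⟩]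
      exact subset_closure
    exact fun p hp => closure_minimal (fun q hq => (hφ q hq).le)
      (isClosed_le φ.continuous continuous_const) (hT' hp)
  set c := φ (0, 1)
  have hφ_apply : ∀ p : Z × ℝ, φ p = φ (p.1, 0) + p.2 * c := fun p => by
    rw [← smul_eq_mul, ← map_smul, ← map_add, Prod.smul_mk, smul_zero, smul_eq_mul, mul_one,
      Prod.mk_add_mk, add_zero, zero_add]
  have hc : c < 0 := by
    have h₁ := hφ _ ht₀
    rw [hφ_apply, hφ_apply (0, β)] at h₁
    have h₂ := hβ t₀ (interior_subset ht₀)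
    simp only at h₁
    nlinarith
  refine ⟨c⁻¹ • φ.comp (ContinuousLinearMap.inl ℝ Z ℝ), fun p hp => ?_⟩
  have h := hφT p hp
  rw [hφ_apply p, hφ_apply (0, β)] at h
  have hφ0 : φ ((0 : Z), (0 : ℝ)) = 0 := map_zero φ
  have key : β - p.2 ≤ φ (p.1, 0) / c :=
    (le_div_iff_of_neg hc).2 (by simp only [hφ0] at h; linarith)
  show β ≤ p.2 + c⁻¹ * φ (p.1, 0)
  rw [div_eq_inv_mul] at key
  linarith

section AffineMinorant

variable {X Z : Type*} [NormedAddCommGroup X] [NormedSpace ℝ X] [NormedAddCommGroup Z]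
  [NormedSpace ℝ Z]

def boundedSublevel (Φ : X → EReal) (ℓ : StrongDual ℝ X) (N : ℕ) : Set X :=
  closedBall 0 N ∩ {w | Φ w ≤ ((N + ℓ w : ℝ) : EReal)}

variable {Φ : X → EReal} (ℓ : StrongDual ℝ X)

lemma boundedSublevel_mono : Monotone (boundedSublevel Φ ℓ) := by
  intro N N' hN w ⟨hw₁, hw₂⟩
  have hN' : (N : ℝ) ≤ N' := by exact_mod_cast hN
  exact ⟨closedBall_subset_closedBall hN' hw₁,
    (show Φ w ≤ _ from hw₂).trans (EReal.coe_le_coe_iff.2 (by linarith))⟩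

lemma convex_boundedSublevel (hΦ : EConvexOn Φ) (N : ℕ) :
    Convex ℝ (boundedSublevel Φ ℓ N) := by
  refine (convex_closedBall _ _).inter fun x hx y hy a b ha hb hab => ?_
  simpa [← add_mul, hab] using hΦ.combo_le_add (ℓ : X →ₗ[ℝ] ℝ) ha hb hab hx hy

lemma isClosed_boundedSublevel (hΦ : LowerSemicontinuous Φ) (N : ℕ) :
    IsClosed (boundedSublevel Φ ℓ N) :=
  isClosed_closedBall.inter <| hΦ.isClosed_epigraph.preimage <|
    continuous_id.prodMk (continuous_coe_real_ereal.comp (continuous_const.add ℓ.continuous))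

lemma eventually_mem_boundedSublevel {w : X} (hw : Φ w ≠ ⊤) (hw' : Φ w ≠ ⊥) :
    ∀ᶠ N in atTop, w ∈ boundedSublevel Φ ℓ N := by
  obtain ⟨N, hN⟩ := exists_nat_ge (max ‖w‖ ((Φ w).toReal - ℓ w))
  refine eventually_atTop.2 ⟨N, fun N' hN' => boundedSublevel_mono ℓ hN' ⟨?_, ?_⟩⟩
  · exact mem_closedBall_zero_iff.2 ((le_max_left _ _).trans hN)
  · show Φ w ≤ _
    rw [← EReal.coe_toReal hw hw']
    exact_mod_cast (by linarith [le_max_right ‖w‖ ((Φ w).toReal - ℓ w)] :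
      (Φ w).toReal ≤ N + ℓ w)

variable [CompleteSpace X] [CompleteSpace Z]

lemma exists_ball_subset_image_boundedSublevel (hΦc : EConvexOn Φ)
    (hΦl : LowerSemicontinuous Φ) (hΦb : ∀ w, Φ w ≠ ⊥) (L : X →L[ℝ] Z)
    (habs : ∀ z, ∃ l : ℝ, 0 < l ∧ ∃ w, Φ w ≠ ⊤ ∧ z = l • L w) :
    ∃ N : ℕ, ∃ ρ > 0, ball (0 : Z) ρ ⊆ L '' boundedSublevel Φ ℓ N := by
  have hconv N := (convex_boundedSublevel ℓ hΦc N).linear_image (L : X →ₗ[ℝ] Z)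
  obtain ⟨w₀, hw₀L, hw₀⟩ : ∃ w₀, L w₀ = 0 ∧ Φ w₀ ≠ ⊤ := by
    obtain ⟨l, hl, w, hw, h0⟩ := habs 0
    exact ⟨w, (smul_eq_zero.1 h0.symm).resolve_left hl.ne', hw⟩
  have hcov : ∀ z, ∃ n N : ℕ, z ∈ ((n : ℝ) + 1) • (L '' boundedSublevel Φ ℓ N) := by
    intro z
    obtain ⟨l, hl, w, hw, rfl⟩ := habs z
    obtain ⟨N, hwN, hw₀N⟩ := ((eventually_mem_boundedSublevel ℓ hw (hΦb w)).and
      (eventually_mem_boundedSublevel ℓ hw₀ (hΦb w₀))).exists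
    obtain ⟨n, hn⟩ := exists_nat_ge l
    have hlw : (l / (n + 1)) • L w ∈ L '' boundedSublevel Φ ℓ N :=
      (hconv N).smul_mem_of_zero_mem ⟨w₀, hw₀N, hw₀L⟩ ⟨w, hwN, rfl⟩
        ⟨by positivity, (div_le_one (by positivity)).2 (by linarith)⟩
    refine ⟨n, N, ?_⟩
    convert smul_mem_smul_set (a := (n : ℝ) + 1) hlw using 1
    rw [smul_smul, mul_div_cancel₀ _ (by positivity)]
  obtain ⟨N, hN⟩ := exists_closure_mem_nhds_zero_of_convex_cover
    (fun N N' h => image_mono (boundedSublevel_mono ℓ h)) hconv hcov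
  obtain ⟨ρ, hρ, hball⟩ := Metric.mem_nhds_iff.1 hN
  exact ⟨N, ρ / 2, half_pos hρ, ball_subset_image_of_ball_subset_closure_image L
    (convex_boundedSublevel ℓ hΦc N) (isClosed_boundedSublevel ℓ hΦl N)
    (isBounded_closedBall.subset inter_subset_left) hball⟩

theorem exists_affine_minorant_of_absorbing (hΦc : EConvexOn Φ) (hΦl : LowerSemicontinuous Φ)
    (hΦb : ∀ w, Φ w ≠ ⊥) (L : X →L[ℝ] Z)
    (habs : ∀ z, ∃ l : ℝ, 0 < l ∧ ∃ w, Φ w ≠ ⊤ ∧ z = l • L w)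
    (A : ℝ) (hker : ∀ w, L w = 0 → ((ℓ w - A : ℝ) : EReal) ≤ Φ w) :
    ∃ ys : StrongDual ℝ Z, ∀ w, ((ℓ w + ys (L w) - A : ℝ) : EReal) ≤ Φ w := by
  obtain ⟨N, ρ, hρ, hsurj⟩ := exists_ball_subset_image_boundedSublevel ℓ hΦc hΦl hΦb L habs
  set T : Set (Z × ℝ) := {p | ∃ w, L w = p.1 ∧ Φ w ≤ ((p.2 + ℓ w : ℝ) : EReal)}
  have hT : Convex ℝ T := by
    rintro ⟨_, s⟩ ⟨x, rfl, hx⟩ ⟨_, t⟩ ⟨y, rfl, hy⟩ a b ha hb hab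
    exact ⟨a • x + b • y, by simp, hΦc.combo_le_add (ℓ : X →ₗ[ℝ] ℝ) ha hb hab hx hy⟩
  have hTint : ((0 : Z), (N : ℝ) + 1) ∈ interior T := by
    refine interior_maximal (t := ball 0 ρ ×ˢ Ioi (N : ℝ)) ?_
      (isOpen_ball.prod isOpen_Ioi) ⟨mem_ball_self hρ, by simp⟩
    rintro ⟨z, t⟩ ⟨hz, ht⟩
    obtain ⟨w, ⟨-, hw⟩, rfl⟩ := hsurj hz
    exact ⟨w, rfl, hw.trans (EReal.coe_le_coe_iff.2 (by linarith [mem_Ioi.1 ht]))⟩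
  obtain ⟨ys, hys⟩ := exists_le_add_of_convex_of_mem_interior hT hTint (β := -A) <| by
    rintro t ⟨w, hw, hΦw⟩
    have : ℓ w - A ≤ t + ℓ w := by exact_mod_cast (hker w hw).trans hΦw
    linarith
  refine ⟨-ys, fun w => ?_⟩
  obtain hw | hw := eq_or_ne (Φ w) ⊤
  · simp [hw]
  have hr := EReal.coe_toReal hw (hΦb w)
  have := hys (L w, (Φ w).toReal - ℓ w) ⟨w, rfl, by simp [hr]⟩
  rw [← hr]
  show ((ℓ w + -ys (L w) - A : ℝ) : EReal) ≤ _
  exact_mod_cast (by linarith : ℓ w + -ys (L w) - A ≤ (Φ w).toReal)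

end AffineMinorant

theorem exists_affine_minorant_of_cone_eq {X Z : Type*} [NormedAddCommGroup X]
    [NormedSpace ℝ X] [CompleteSpace X] [NormedAddCommGroup Z] [NormedSpace ℝ Z] [CompleteSpace Z]
    {Φ : X → EReal} (hΦc : EConvexOn Φ) (hΦl : LowerSemicontinuous Φ) (hΦb : ∀ w, Φ w ≠ ⊥)
    (L : X →L[ℝ] Z) (M : Submodule ℝ Z) (hM : IsClosed (M : Set Z))
    (hcone : {z | ∃ l : ℝ, 0 < l ∧ ∃ w, Φ w ≠ ⊤ ∧ z = l • L w} = M)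
    (ℓ : StrongDual ℝ X) (A : ℝ) (hker : ∀ w, L w = 0 → ((ℓ w - A : ℝ) : EReal) ≤ Φ w) :
    ∃ ys : StrongDual ℝ Z, ∀ w, ((ℓ w + ys (L w) - A : ℝ) : EReal) ≤ Φ w := by
  -- Work on `L⁻¹ M`, where `L (dom Φ)` is absorbing in `M`, and extend the multiplier by
  -- Hahn–Banach.
  have hdom : ∀ w, Φ w ≠ ⊤ → L w ∈ M := fun w hw =>
    (Set.ext_iff.1 hcone (L w)).1 ⟨1, one_pos, w, hw, (one_smul _ _).symm⟩
  set X' := M.comap (L : X →ₗ[ℝ] Z)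
  have : CompleteSpace X' :=
    (show IsClosed (X' : Set X) from hM.preimage L.continuous).completeSpace_coe
  have : CompleteSpace M := hM.completeSpace_coe
  let L' : X' →L[ℝ] M := (L.comp X'.subtypeL).codRestrict M fun w => w.2
  have habs : ∀ z : M, ∃ l : ℝ, 0 < l ∧ ∃ w : X', Φ w ≠ ⊤ ∧ z = l • L' w := fun z => by
    obtain ⟨l, hl, w, hw, hz⟩ := (Set.ext_iff.1 hcone z).2 z.2
    exact ⟨l, hl, ⟨w, hdom w hw⟩, hw, Subtype.ext hz⟩
  obtain ⟨ys', hys'⟩ := exists_affine_minorant_of_absorbing (Φ := fun w : X' => Φ w)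
    (ℓ.comp X'.subtypeL) (hΦc.comp_linearMap X'.subtype) (hΦl.comp continuous_subtype_val)
    (fun w : X' => hΦb w) L' habs A
    (fun w hw => hker w (congrArg Subtype.val hw))
  obtain ⟨ys, hys, -⟩ := exists_extension_norm_eq M ys'
  refine ⟨ys, fun w => ?_⟩
  obtain hw | hw := eq_or_ne (Φ w) ⊤
  · simp [hw]
  rw [hys ⟨L w, hdom w hw⟩]
  exact hys' ⟨w, hdom w hw⟩

def partialInfConv {E F : Type*} [AddGroup F] (f g : E × F → EReal) (p : E × F) : EReal :=
  ⨅ v : F, f (p.1, p.2 - v) + g (p.1, v)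

lemma partialInfConv_le_of_fst_eq {E F : Type*} [AddGroup F] (f g : E × F → EReal)
    {a b : E × F} (hab : a.1 = b.1) : partialInfConv f g (a.1, a.2 + b.2) ≤ f a + g b := by
  obtain ⟨x, y⟩ := a
  obtain ⟨_, v⟩ := b
  obtain rfl : x = _ := hab
  simpa [partialInfConv] using iInf_le (fun v' => f (x, y + v - v') + g (x, v')) v

section Conjugate

variable {E F : Type*} [NormedAddCommGroup E] [NormedSpace ℝ E] [NormedAddCommGroup F]
  [NormedSpace ℝ F] {f g : E × F → EReal}

lemma conj2_le_coe_iff {p : StrongDual ℝ E × StrongDual ℝ F} {A : ℝ} :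
    conj2 f p ≤ A ↔ ∀ q, ((p.1 q.1 + p.2 q.2 - A : ℝ) : EReal) ≤ f q := by
  simp only [conj2, iSup_le_iff, EReal.coe_sub_le_coe_iff]

lemma conj2_ne_bot {q : E × F} (hq : f q ≠ ⊤) (p : StrongDual ℝ E × StrongDual ℝ F) :
    conj2 f p ≠ ⊥ := by
  intro h
  refine hq ((EReal.eq_top_iff_forall_lt _).2 fun y => ?_)
  set c := p.1 q.1 + p.2 q.2
  have := conj2_le_coe_iff.1 (h.trans_le bot_le : conj2 f p ≤ ((c - (y + 1) : ℝ) : EReal)) q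
  exact (EReal.coe_lt_coe_iff.2 (by linarith)).trans_le this

lemma conj2_partialInfConv_le (hf : ∀ q, f q ≠ ⊥) (hg : ∀ q, g q ≠ ⊥)
    (xs zs : StrongDual ℝ E) (us : StrongDual ℝ F) :
    conj2 (partialInfConv f g) (xs, us) ≤ conj2 f (xs - zs, us) + conj2 g (zs, us) := by
  refine iSup_le fun p => EReal.sub_iInf_le fun v => ?_
  have hsplit : xs p.1 + us p.2 = ((xs - zs) p.1 + us (p.2 - v)) + (zs p.1 + us v) := by
    simp only [sub_apply, map_sub]
    ring
  dsimp only
  rw [hsplit, EReal.coe_add_sub_add (hf _) (hg _)]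
  exact add_le_add
    (le_iSup (fun q : E × F => (((xs - zs) q.1 + us q.2 : ℝ) : EReal) - f q) (p.1, p.2 - v))
    (le_iSup (fun q : E × F => ((zs q.1 + us q.2 : ℝ) : EReal) - g q) (p.1, v))

lemma conj2_sub_add_conj2_le (hf : ∀ q, f q ≠ ⊥) (hg : ∀ q, g q ≠ ⊥)
    (xs ys : StrongDual ℝ E) (us : StrongDual ℝ F) {A : ℝ}
    (h : ∀ a b : E × F, ((xs a.1 + us a.2 + us b.2 + ys (b.1 - a.1) - A : ℝ) : EReal) ≤ f a + g b) :
    conj2 f (xs - ys, us) + conj2 g (ys, us) ≤ A := by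
  refine EReal.iSup_add_iSup_le fun a b => ?_
  rw [← EReal.coe_add_sub_add (hf a) (hg b), EReal.coe_sub_le_coe_iff]
  convert h a b using 3
  simp only [sub_apply, map_sub]
  ring

end Conjugate

theorem exists_conj2_sub_add_conj2_le {E F : Type*} [NormedAddCommGroup E] [NormedSpace ℝ E]
    [CompleteSpace E] [NormedAddCommGroup F] [NormedSpace ℝ F] [CompleteSpace F]
    {f g : E × F → EReal} (hfb : ∀ q, f q ≠ ⊥) (hfc : EConvexOn f) (hfl : LowerSemicontinuous f)
    (hgb : ∀ q, g q ≠ ⊥) (hgc : EConvexOn g) (hgl : LowerSemicontinuous g)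
    (M : Submodule ℝ E) (hMc : IsClosed (M : Set E))
    (hM : {z : E | ∃ l : ℝ, 0 < l ∧ ∃ p : E × F, g p ≠ ⊤ ∧ ∃ q : E × F, f q ≠ ⊤ ∧
      z = l • (p.1 - q.1)} = M)
    (xs : StrongDual ℝ E) (us : StrongDual ℝ F) {A : ℝ}
    (hA : conj2 (partialInfConv f g) (xs, us) ≤ A) :
    ∃ ys : StrongDual ℝ E, conj2 f (xs - ys, us) + conj2 g (ys, us) ≤ A := by
  set Φ : (E × F) × (E × F) → EReal := fun w => f w.1 + g w.2
  set L : (E × F) × (E × F) →L[ℝ] E :=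
    ContinuousLinearMap.fst ℝ E F ∘L ContinuousLinearMap.snd ℝ (E × F) (E × F) -
      ContinuousLinearMap.fst ℝ E F ∘L ContinuousLinearMap.fst ℝ (E × F) (E × F)
  set ℓ : StrongDual ℝ ((E × F) × (E × F)) :=
    xs.coprod us ∘L ContinuousLinearMap.fst ℝ (E × F) (E × F) +
      us ∘L ContinuousLinearMap.snd ℝ E F ∘L ContinuousLinearMap.snd ℝ (E × F) (E × F)
  have hcone : {z | ∃ l : ℝ, 0 < l ∧ ∃ w, Φ w ≠ ⊤ ∧ z = l • L w} = M := by
    rw [← hM]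
    ext z
    simp only [Set.mem_ofPred_eq, Φ, EReal.add_ne_top_iff_ne_top₂ (hfb _) (hgb _)]
    constructor
    · rintro ⟨l, hl, w, ⟨hf, hg⟩, rfl⟩
      exact ⟨l, hl, w.2, hg, w.1, hf, rfl⟩
    · rintro ⟨l, hl, p, hp, q, hq, rfl⟩
      exact ⟨l, hl, (q, p), ⟨hq, hp⟩, rfl⟩
  have hker : ∀ w, L w = 0 → ((ℓ w - A : ℝ) : EReal) ≤ Φ w := fun w hw => by
    have := (conj2_le_coe_iff.1 hA (w.1.1, w.1.2 + w.2.2)).trans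
      (partialInfConv_le_of_fst_eq f g (sub_eq_zero.1 hw).symm)
    simpa [ℓ, add_assoc] using this
  obtain ⟨ys, hys⟩ := exists_affine_minorant_of_cone_eq (Φ := Φ)
    ((hfc.comp_linearMap (LinearMap.fst ℝ (E × F) (E × F))).add
      (hgc.comp_linearMap (LinearMap.snd ℝ (E × F) (E × F))))
    ((hfl.comp continuous_fst).ereal_add (hgl.comp continuous_snd) (fun _ => hfb _)
      (fun _ => hgb _))
    (fun w => EReal.add_ne_bot_iff.2 ⟨hfb _, hgb _⟩) L M hMc hcone ℓ A hker
  exact ⟨ys, conj2_sub_add_conj2_le hfb hgb xs ys us fun a b => by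
    simpa [ℓ, L, add_assoc] using hys (a, b)⟩

theorem stmt4_general {E F : Type*} [NormedAddCommGroup E] [NormedSpace ℝ E] [CompleteSpace E] [NormedAddCommGroup F] [NormedSpace ℝ F] [CompleteSpace F]
    (f g : E × F → EReal)
    (hfp : ProperFun f) (hfc : EConvexOn f) (hfl : LowerSemicontinuous f)
    (hgp : ProperFun g) (hgc : EConvexOn g) (hgl : LowerSemicontinuous g)
    (hL : ∃ M : Submodule ℝ E, IsClosed (M : Set E) ∧
      {z : E | ∃ l : ℝ, 0 < l ∧ ∃ p : E × F, g p ≠ ⊤ ∧ ∃ q : E × F, f q ≠ ⊤ ∧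
        z = l • (p.1 - q.1)} = (M : Set E))
    (h : E × F → EReal)
    (hdef : ∀ p : E × F, h p = ⨅ v : F, f (p.1, p.2 - v) + g (p.1, v)) :
    ∀ (xs : StrongDual ℝ E) (us : StrongDual ℝ F),
      ∃ ys : StrongDual ℝ E,
        conj2 h (xs, us) = conj2 f (xs - ys, us) + conj2 g (ys, us) ∧
        ∀ zs : StrongDual ℝ E,
          conj2 h (xs, us) ≤ conj2 f (xs - zs, us) + conj2 g (zs, us) := by
  obtain rfl : h = partialInfConv f g := funext hdef
  intro xs us
  obtain ⟨M, hMc, hM⟩ := hL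
  have hweak := fun zs => conj2_partialInfConv_le hfp.2 hgp.2 xs zs us
  generalize hα : conj2 (partialInfConv f g) (xs, us) = α at hweak ⊢
  induction α with
  | bot =>
    obtain ⟨l, hl, p, hp, q, hq, h0⟩ := (Set.ext_iff.1 hM 0).2 M.zero_mem
    have hqp : q.1 = p.1 := (sub_eq_zero.1 ((smul_eq_zero.1 h0.symm).resolve_left hl.ne')).symm
    exact absurd hα <| conj2_ne_bot (ne_top_of_le_ne_top (EReal.add_ne_top hq hp)
      (partialInfConv_le_of_fst_eq f g hqp)) _
  | top => exact ⟨0, (top_le_iff.1 (hweak 0)).symm, hweak⟩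
  | coe A =>
    obtain ⟨ys, hys⟩ :=
      exists_conj2_sub_add_conj2_le hfp.2 hfc hfl hgp.2 hgc hgl M hMc hM xs us hα.le
    exact ⟨ys, le_antisymm (hweak ys) hys, hweak⟩

theorem stmt4 {E F : Type*} [NormedAddCommGroup E] [NormedSpace ℝ E] [CompleteSpace E] [Nontrivial E] [NormedAddCommGroup F] [NormedSpace ℝ F] [CompleteSpace F] [Nontrivial F]
    (f g : E × F → EReal)
    (hfp : ProperFun f) (hfc : EConvexOn f) (hfl : LowerSemicontinuous f)
    (hgp : ProperFun g) (hgc : EConvexOn g) (hgl : LowerSemicontinuous g)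
    (hL : ∃ M : Submodule ℝ E, IsClosed (M : Set E) ∧
      {z : E | ∃ l : ℝ, 0 < l ∧ ∃ p : E × F, g p ≠ ⊤ ∧ ∃ q : E × F, f q ≠ ⊤ ∧
        z = l • (p.1 - q.1)} = (M : Set E))
    (h : E × F → EReal)
    (hdef : ∀ p : E × F, h p = ⨅ v : F, f (p.1, p.2 - v) + g (p.1, v))
    (hne : ∀ p : E × F, h p ≠ ⊥) :
    ∀ (xs : StrongDual ℝ E) (us : StrongDual ℝ F),
      ∃ ys : StrongDual ℝ E,
        conj2 h (xs, us) = conj2 f (xs - ys, us) + conj2 g (ys, us) ∧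
        ∀ zs : StrongDual ℝ E,
          conj2 h (xs, us) ≤ conj2 f (xs - zs, us) + conj2 g (zs, us) :=
  stmt4_general f g hfp hfc hfl hgp hgc hgl hL h hdef
end
end

section
/- Let E be a nonzero Banach space, K a nonempty weak-compact convex subset of E, y* ∈ E*, and define h_{K,y*}(x,x*) := I_K(x) + ⟨x,y*⟩ + sup⟨K, x* − y*⟩ on E × E*. Then h_{K,y*}*(x*,x**) = sup⟨K, x* − y*⟩ + I_{K̂}(x**) + ⟨y*,x**⟩, and consequently h_{K,y*} is a strongly representative function on E × E*. -/
open NormedSpace Set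
open scoped Classical

noncomputable section

/-!
Write `σ_K(w) = sup_{k ∈ K} w k`; by weak compactness the supremum is attained, and
`h(x, x*) = y*(x) + σ_K(x* - y*)` for `x ∈ K`. In the conjugate the variables separate: the
supremum over `x ∈ K` gives `σ_K(x* - y*) + x**(y*)`, and with `w = u* - y*` the supremum over
`u*` becomes `sup_w (x**(w) - σ_K(w))`. As `σ_K` is sublinear, this is `0` when `x** ≤ σ_K` and
`+∞` otherwise. Finally `x** ≤ σ_K` forces `x** ∈ K̂`: for finitely many `v_i ∈ E*` the point
`(x**(v_i))_i` lies in the compact convex set `{(v_i k)_i : k ∈ K}` of `ℝⁿ`, since a functional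
separating it would give some `w` with `σ_K(w) < x**(w)`; weak compactness of `K` then yields one
`k ∈ K` with `w k = x**(w)` for all `w`. Convexity and lower semicontinuity of `h` come from those
of `σ_K`, a supremum of continuous linear functions, and from `K` being convex and closed.
-/

section ExtendTop

variable {G : Type*}

def extendTop (S : Set G) (g : G → ℝ) (x : G) : EReal :=
  if x ∈ S then (g x : EReal) else ⊤

theorem extendTop_ne_bot (S : Set G) (g : G → ℝ) (x : G) : extendTop S g x ≠ ⊥ := by
  unfold extendTop
  split_ifs
  exacts [EReal.coe_ne_bot _, top_ne_bot]

theorem econvexOn_extendTop [AddCommGroup G] [Module ℝ G] {S : Set G} {g : G → ℝ}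
    (hg : ConvexOn ℝ S g) : EConvexOn (extendTop S g) := by
  intro x y a b ha hb hab
  by_cases hxy : x ∈ S ∧ y ∈ S
  · rw [extendTop, extendTop, extendTop, if_pos (hg.1 hxy.1 hxy.2 ha hb hab), if_pos hxy.1,
      if_pos hxy.2]
    exact_mod_cast hg.2 hxy.1 hxy.2 ha hb hab
  rcases ha.eq_or_lt with rfl | ha
  · obtain rfl : b = 1 := by linarith
    simp
  rcases hb.eq_or_lt with rfl | hb
  · obtain rfl : a = 1 := by linarith
    simp
  have hmul_ne_bot : ∀ {t : ℝ}, 0 < t → ∀ z, (t : EReal) * extendTop S g z ≠ ⊥ := by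
    intro t ht z
    unfold extendTop
    split_ifs
    · exact EReal.coe_ne_bot _
    · rw [EReal.mul_top_of_pos (by exact_mod_cast ht)]; exact top_ne_bot
  have hmul_top : ∀ {t : ℝ}, 0 < t → ∀ z ∉ S, (t : EReal) * extendTop S g z = ⊤ := by
    intro t ht z hz
    rw [extendTop, if_neg hz, EReal.mul_top_of_pos (by exact_mod_cast ht)]
  rcases not_and_or.1 hxy with hx | hy
  · rw [hmul_top ha x hx, EReal.top_add_of_ne_bot (hmul_ne_bot hb y)]
    exact le_top
  · rw [hmul_top hb y hy, EReal.add_top_of_ne_bot (hmul_ne_bot ha x)]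
    exact le_top

theorem lowerSemicontinuous_extendTop [TopologicalSpace G] {S : Set G} {g : G → ℝ}
    (hS : IsClosed S) (hg : LowerSemicontinuous g) : LowerSemicontinuous (extendTop S g) := by
  have hcoe : LowerSemicontinuous fun x => (g x : EReal) :=
    continuous_coe_real_ereal.comp_lowerSemicontinuous hg EReal.coe_strictMono.monotone
  intro x y hy
  by_cases hx : x ∈ S
  · rw [extendTop, if_pos hx] at hy
    filter_upwards [hcoe x y hy] with q hq
    unfold extendTop
    split_ifs
    exacts [hq, hq.trans_le le_top]
  · rw [extendTop, if_neg hx] at hy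
    filter_upwards [hS.isOpen_compl.mem_nhds hx] with q hq
    rwa [extendTop, if_neg hq]

end ExtendTop

section SupportFunction

variable {E : Type*} [NormedAddCommGroup E] [NormedSpace ℝ E] {K : Set E}

def supportFun (K : Set E) (w : StrongDual ℝ E) : ℝ := sSup ((fun k : E => w k) '' K)

theorem continuous_apply_toWeakSpace_symm (w : StrongDual ℝ E) :
    Continuous fun y : WeakSpace ℝ E => w ((toWeakSpace ℝ E).symm y) :=
  WeakBilin.eval_continuous (topDualPairing ℝ E).flip w

theorem IsCompact.isClosed_of_toWeakSpace (hKcpt : IsCompact (toWeakSpace ℝ E '' K)) :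
    IsClosed K := by
  have := hKcpt.isClosed.preimage (toWeakSpaceCLM ℝ E).continuous
  rwa [← (toWeakSpace ℝ E).injective.preimage_image K]

theorem isCompact_image_apply (hKcpt : IsCompact (toWeakSpace ℝ E '' K)) (w : StrongDual ℝ E) :
    IsCompact ((fun k : E => w k) '' K) := by
  simpa [image_image] using hKcpt.image (continuous_apply_toWeakSpace_symm w)

theorem apply_le_supportFun (hKcpt : IsCompact (toWeakSpace ℝ E '' K)) {w : StrongDual ℝ E}
    {k : E} (hk : k ∈ K) : w k ≤ supportFun K w :=
  le_csSup (isCompact_image_apply hKcpt w).bddAbove (mem_image_of_mem _ hk)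

theorem supportFun_le (hK : K.Nonempty) {w : StrongDual ℝ E} {c : ℝ}
    (h : ∀ k ∈ K, w k ≤ c) : supportFun K w ≤ c :=
  csSup_le (hK.image _) (forall_mem_image.2 h)

theorem exists_apply_eq_supportFun (hK : K.Nonempty) (hKcpt : IsCompact (toWeakSpace ℝ E '' K))
    (w : StrongDual ℝ E) : ∃ k ∈ K, w k = supportFun K w :=
  (isCompact_image_apply hKcpt w).sSup_mem (hK.image _)

theorem supportFun_zero (hK : K.Nonempty) (hKcpt : IsCompact (toWeakSpace ℝ E '' K)) :
    supportFun K 0 = 0 :=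
  le_antisymm (supportFun_le hK fun _ _ => le_rfl)
    (hK.elim fun _ hk => apply_le_supportFun (w := 0) hKcpt hk)

theorem supportFun_add_le (hK : K.Nonempty) (hKcpt : IsCompact (toWeakSpace ℝ E '' K))
    (v w : StrongDual ℝ E) : supportFun K (v + w) ≤ supportFun K v + supportFun K w :=
  supportFun_le hK fun _ hk =>
    add_le_add (apply_le_supportFun hKcpt hk) (apply_le_supportFun hKcpt hk)

theorem supportFun_smul_le (hK : K.Nonempty) (hKcpt : IsCompact (toWeakSpace ℝ E '' K)) {t : ℝ}
    (ht : 0 ≤ t) (w : StrongDual ℝ E) : supportFun K (t • w) ≤ t * supportFun K w :=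
  supportFun_le hK fun _ hk => mul_le_mul_of_nonneg_left (apply_le_supportFun hKcpt hk) ht

theorem convexOn_supportFun (hK : K.Nonempty) (hKcpt : IsCompact (toWeakSpace ℝ E '' K)) :
    ConvexOn ℝ univ (supportFun K) :=
  ⟨convex_univ, fun v _ w _ _ _ ha hb _ => (supportFun_add_le hK hKcpt _ _).trans
    (add_le_add (supportFun_smul_le hK hKcpt ha v) (supportFun_smul_le hK hKcpt hb w))⟩

theorem lowerSemicontinuous_supportFun (hKcpt : IsCompact (toWeakSpace ℝ E '' K)) :
    LowerSemicontinuous (supportFun K) := by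
  have hsup : supportFun K = fun w : StrongDual ℝ E => ⨆ k : K, w k :=
    funext fun _ => sSup_image'
  rw [hsup]
  exact lowerSemicontinuous_ciSup
    (fun w => image_eq_range (fun k : E => w k) K ▸ (isCompact_image_apply hKcpt w).bddAbove)
    fun k => (continuous_id.clm_apply continuous_const).lowerSemicontinuous

end SupportFunction

section Bidual

variable {E : Type*} [NormedAddCommGroup E] [NormedSpace ℝ E] {K : Set E}

theorem apply_comp_pi {ι : Type*} [Fintype ι] (z : StrongDual ℝ (StrongDual ℝ E))
    (v : ι → StrongDual ℝ E) (f : StrongDual ℝ (ι → ℝ)) :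
    z (f.comp (ContinuousLinearMap.pi v)) = f fun i => z (v i) := by
  have hf : ∀ x : ι → ℝ, f x = ∑ i, x i * f (Pi.single i 1) := fun x => by
    conv_lhs => rw [pi_eq_sum_univ' x]
    simp only [map_sum, map_smul, smul_eq_mul]
  have hexpand : f.comp (ContinuousLinearMap.pi v) = ∑ i, f (Pi.single i 1) • v i := by
    ext k
    rw [ContinuousLinearMap.comp_apply, hf, sum_apply]
    simp only [ContinuousLinearMap.pi_apply, smul_apply, smul_eq_mul, mul_comm]
  rw [hexpand, map_sum, hf fun i => z (v i)]
  simp only [map_smul, smul_eq_mul, mul_comm]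

theorem exists_mem_forall_apply_eq (hK : K.Nonempty) (hKconv : Convex ℝ K)
    (hKcpt : IsCompact (toWeakSpace ℝ E '' K)) {z : StrongDual ℝ (StrongDual ℝ E)}
    (hz : ∀ w, z w ≤ supportFun K w) {ι : Type*} [Fintype ι] (v : ι → StrongDual ℝ E) :
    ∃ k ∈ K, ∀ i, v i k = z (v i) := by
  set T := ContinuousLinearMap.pi v
  suffices hmem : (fun i => z (v i)) ∈ T '' K by
    obtain ⟨k, hk, hkz⟩ := hmem
    exact ⟨k, hk, congrFun hkz⟩
  by_contra hnot
  have hTcpt : IsCompact (T '' K) := by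
    simpa [image_image, T] using
      hKcpt.image (continuous_pi fun i => continuous_apply_toWeakSpace_symm (v i))
  obtain ⟨f, u, hfK, hfz⟩ :=
    geometric_hahn_banach_closed_point (hKconv.linear_image (T : E →ₗ[ℝ] ι → ℝ))
      hTcpt.isClosed hnot
  have hσ : supportFun K (f.comp T) ≤ u :=
    supportFun_le hK fun k hk => (hfK _ (mem_image_of_mem T hk)).le
  have := hz (f.comp T)
  rw [apply_comp_pi] at this
  linarith

theorem mem_image_inclusionInDoubleDual_of_le_supportFun (hK : K.Nonempty)
    (hKconv : Convex ℝ K) (hKcpt : IsCompact (toWeakSpace ℝ E '' K))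
    {z : StrongDual ℝ (StrongDual ℝ E)} (hz : ∀ w, z w ≤ supportFun K w) :
    z ∈ inclusionInDoubleDual ℝ E '' K := by
  have hclosed : ∀ w : StrongDual ℝ E,
      IsClosed {y : WeakSpace ℝ E | w ((toWeakSpace ℝ E).symm y) = z w} :=
    fun w => isClosed_eq (continuous_apply_toWeakSpace_symm w) continuous_const
  obtain ⟨_, ⟨k, hk, rfl⟩, hkz⟩ := hKcpt.inter_iInter_nonempty _ hclosed fun s => by
    obtain ⟨k, hk, hkz⟩ :=
      exists_mem_forall_apply_eq hK hKconv hKcpt hz fun w : s => (w : StrongDual ℝ E)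
    exact ⟨toWeakSpace ℝ E k, mem_image_of_mem _ hk,
      mem_iInter₂.2 fun w hw => hkz ⟨w, hw⟩⟩
  exact ⟨k, hk, ContinuousLinearMap.ext fun w => by simpa using mem_iInter.1 hkz w⟩

theorem apply_le_supportFun_of_mem (hKcpt : IsCompact (toWeakSpace ℝ E '' K))
    {z : StrongDual ℝ (StrongDual ℝ E)} (hz : z ∈ inclusionInDoubleDual ℝ E '' K)
    (w : StrongDual ℝ E) : z w ≤ supportFun K w := by
  obtain ⟨k, hk, rfl⟩ := hz
  exact apply_le_supportFun hKcpt hk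

theorem exists_lt_apply_sub_supportFun (hK : K.Nonempty) (hKconv : Convex ℝ K)
    (hKcpt : IsCompact (toWeakSpace ℝ E '' K)) {z : StrongDual ℝ (StrongDual ℝ E)}
    (hz : z ∉ inclusionInDoubleDual ℝ E '' K) (r : ℝ) :
    ∃ w, r < z w - supportFun K w := by
  obtain ⟨v, hv⟩ : ∃ v, supportFun K v < z v := by
    by_contra! h
    exact hz (mem_image_inclusionInDoubleDual_of_le_supportFun hK hKconv hKcpt h)
  obtain ⟨t, ht⟩ := exists_nat_gt (r / (z v - supportFun K v))
  refine ⟨(t : ℝ) • v, ?_⟩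
  have hσ := supportFun_smul_le hK hKcpt t.cast_nonneg v
  rw [map_smul, smul_eq_mul]
  calc r < t * (z v - supportFun K v) := (div_lt_iff₀ (sub_pos.2 hv)).1 ht
    _ ≤ t * z v - supportFun K ((t : ℝ) • v) := by linarith

end Bidual

section HFun

variable {E : Type*} [NormedAddCommGroup E] [NormedSpace ℝ E] {K : Set E} {ys : StrongDual ℝ E}

def hfunReal (K : Set E) (ys : StrongDual ℝ E) (p : E × StrongDual ℝ E) : ℝ :=
  ys p.1 + supportFun K (p.2 - ys)

theorem hfun_eq_extendTop (K : Set E) (ys : StrongDual ℝ E) :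
    hfun K ys = extendTop (Prod.fst ⁻¹' K) (hfunReal K ys) := by
  ext p
  by_cases hp : p.1 ∈ K <;> simp [hfun, extendTop, hfunReal, supportFun, hp]

theorem convexOn_hfunReal (hK : K.Nonempty) (hKconv : Convex ℝ K)
    (hKcpt : IsCompact (toWeakSpace ℝ E '' K)) (ys : StrongDual ℝ E) :
    ConvexOn ℝ (Prod.fst ⁻¹' K) (hfunReal K ys) := by
  refine ⟨hKconv.linear_preimage (LinearMap.fst ℝ E _), fun p _ q _ a b ha hb hab => ?_⟩
  have hshift : (a • p + b • q).2 - ys = a • (p.2 - ys) + b • (q.2 - ys) :=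
    calc (a • p + b • q).2 - ys = a • p.2 + b • q.2 - (a + b) • ys := by rw [hab, one_smul]; rfl
      _ = a • (p.2 - ys) + b • (q.2 - ys) := by module
  have hσ := (convexOn_supportFun hK hKcpt).2 (mem_univ (p.2 - ys)) (mem_univ (q.2 - ys)) ha hb hab
  simp only [hfunReal, hshift, Prod.fst_add, Prod.smul_fst, map_add, map_smul, smul_eq_mul]
    at hσ ⊢
  linarith

theorem lowerSemicontinuous_hfunReal (hKcpt : IsCompact (toWeakSpace ℝ E '' K))
    (ys : StrongDual ℝ E) : LowerSemicontinuous (hfunReal K ys) :=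
  (ys.continuous.comp continuous_fst).lowerSemicontinuous.add
    ((lowerSemicontinuous_supportFun hKcpt).comp (continuous_snd.sub continuous_const))

theorem pairing_le_hfun (hKcpt : IsCompact (toWeakSpace ℝ E '' K)) (p : E × StrongDual ℝ E) :
    ((p.2 p.1 : ℝ) : EReal) ≤ hfun K ys p := by
  rw [hfun_eq_extendTop, extendTop]
  split_ifs with hp
  · have := apply_le_supportFun (w := p.2 - ys) hKcpt hp
    rw [sub_apply] at this
    rw [EReal.coe_le_coe_iff, hfunReal]
    linarith
  · exact le_top

theorem isRep_hfun (hK : K.Nonempty) (hKconv : Convex ℝ K)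
    (hKcpt : IsCompact (toWeakSpace ℝ E '' K)) (ys : StrongDual ℝ E) : IsRep (hfun K ys) := by
  rw [IsRep, hfun_eq_extendTop]
  refine ⟨⟨?_, extendTop_ne_bot _ _⟩,
    econvexOn_extendTop (convexOn_hfunReal hK hKconv hKcpt ys),
    lowerSemicontinuous_extendTop (hKcpt.isClosed_of_toWeakSpace.preimage continuous_fst)
      (lowerSemicontinuous_hfunReal hKcpt ys), ?_⟩
  · obtain ⟨k, hk⟩ := hK
    exact ⟨(k, 0), by simp [extendTop, hk]⟩
  · rw [← hfun_eq_extendTop]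
    exact pairing_le_hfun hKcpt

theorem le_conj2_hfun (hK : K.Nonempty) (hKcpt : IsCompact (toWeakSpace ℝ E '' K))
    (p : StrongDual ℝ E × StrongDual ℝ (StrongDual ℝ E)) (w : StrongDual ℝ E) :
    ((supportFun K (p.1 - ys) + p.2 ys + (p.2 w - supportFun K w) : ℝ) : EReal)
      ≤ conj2 (hfun K ys) p := by
  obtain ⟨k, hk, hkσ⟩ := exists_apply_eq_supportFun hK hKcpt (p.1 - ys)
  refine le_iSup_of_le (k, ys + w) ?_
  rw [hfun_eq_extendTop, extendTop, if_pos (mem_preimage.2 hk), ← EReal.coe_sub,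
    EReal.coe_le_coe_iff, ← hkσ]
  simp only [hfunReal, add_sub_cancel_left, map_add, sub_apply]
  linarith

theorem conj2_hfun_le (hKcpt : IsCompact (toWeakSpace ℝ E '' K))
    {p : StrongDual ℝ E × StrongDual ℝ (StrongDual ℝ E)}
    (hp : ∀ w, p.2 w ≤ supportFun K w) :
    conj2 (hfun K ys) p ≤ ((supportFun K (p.1 - ys) + p.2 ys : ℝ) : EReal) := by
  refine iSup_le fun q => ?_
  rw [hfun_eq_extendTop, extendTop]
  split_ifs with hq
  · rw [← EReal.coe_sub, EReal.coe_le_coe_iff]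
    have h1 := apply_le_supportFun (w := p.1 - ys) hKcpt hq
    have h2 := hp (q.2 - ys)
    simp only [hfunReal, sub_apply, map_sub] at h1 h2 ⊢
    linarith
  · rw [EReal.sub_top]
    exact bot_le

theorem conj2_hfun (hK : K.Nonempty) (hKconv : Convex ℝ K)
    (hKcpt : IsCompact (toWeakSpace ℝ E '' K))
    (p : StrongDual ℝ E × StrongDual ℝ (StrongDual ℝ E)) :
    conj2 (hfun K ys) p = (supportFun K (p.1 - ys) : EReal)
      + (if p.2 ∈ inclusionInDoubleDual ℝ E '' K then (0 : EReal) else ⊤)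
      + (p.2 ys : EReal) := by
  split_ifs with hp
  · refine le_antisymm ((conj2_hfun_le hKcpt (apply_le_supportFun_of_mem hKcpt hp)).trans_eq
      (by simp [EReal.coe_add])) ?_
    simpa [supportFun_zero hK hKcpt, EReal.coe_add] using le_conj2_hfun hK hKcpt p 0
  · rw [EReal.coe_add_top, EReal.top_add_coe, EReal.eq_top_iff_forall_lt]
    intro r
    obtain ⟨w, hw⟩ := exists_lt_apply_sub_supportFun hK hKconv hKcpt hp
      (r - supportFun K (p.1 - ys) - p.2 ys)
    exact lt_of_lt_of_le (EReal.coe_lt_coe_iff.2 (by linarith)) (le_conj2_hfun hK hKcpt p w)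

theorem pairing_le_conj2_hfun (hK : K.Nonempty) (hKconv : Convex ℝ K)
    (hKcpt : IsCompact (toWeakSpace ℝ E '' K))
    (p : StrongDual ℝ E × StrongDual ℝ (StrongDual ℝ E)) :
    ((p.2 p.1 : ℝ) : EReal) ≤ conj2 (hfun K ys) p := by
  rw [conj2_hfun hK hKconv hKcpt]
  split_ifs with hp
  · obtain ⟨k, hk, hkp⟩ := hp
    rw [← hkp]
    have := apply_le_supportFun (w := p.1 - ys) hKcpt hk
    rw [add_zero, ← EReal.coe_add, EReal.coe_le_coe_iff]
    simp only [NormedSpace.dual_def, sub_apply] at this ⊢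
    linarith
  · rw [EReal.coe_add_top, EReal.top_add_coe]
    exact le_top

end HFun

theorem stmt5_general {E : Type*} [NormedAddCommGroup E] [NormedSpace ℝ E]
    (K : Set E) (hK : K.Nonempty) (hKconv : Convex ℝ K)
    (hKcpt : IsCompact (toWeakSpace ℝ E '' K)) (ys : StrongDual ℝ E) :
    (∀ p : StrongDual ℝ E × StrongDual ℝ (StrongDual ℝ E),
      conj2 (hfun K ys) p =
        ((sSup ((fun k : E => (p.1 - ys) k) '' K) : ℝ) : EReal)
          + (if p.2 ∈ inclusionInDoubleDual ℝ E '' K then (0 : EReal) else ⊤)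
          + ((p.2 ys : ℝ) : EReal)) ∧
    IsStrongRep (hfun K ys) :=
  ⟨conj2_hfun hK hKconv hKcpt, isRep_hfun hK hKconv hKcpt ys,
    pairing_le_conj2_hfun hK hKconv hKcpt⟩

theorem stmt5 {E : Type*} [NormedAddCommGroup E] [NormedSpace ℝ E] [CompleteSpace E] [Nontrivial E]
    (K : Set E) (hK : K.Nonempty) (hKconv : Convex ℝ K)
    (hKcpt : IsCompact (toWeakSpace ℝ E '' K)) (ys : StrongDual ℝ E) :
    (∀ p : StrongDual ℝ E × StrongDual ℝ (StrongDual ℝ E),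
      conj2 (hfun K ys) p =
        ((sSup ((fun k : E => (p.1 - ys) k) '' K) : ℝ) : EReal)
          + (if p.2 ∈ inclusionInDoubleDual ℝ E '' K then (0 : EReal) else ⊤)
          + ((p.2 ys : ℝ) : EReal)) ∧
    IsStrongRep (hfun K ys) :=
  stmt5_general K hK hKconv hKcpt ys
end
end

section
/- Let E be a nonzero Banach space, y ∈ E, K a nonempty weak*-compact convex subset of E*, and define g_{y,K}(x,x*) := sup⟨x − y, K⟩ + I_K(x*) + ⟨y,x*⟩ on E × E*. Then g_{y,K}*(x*,x**) = I_K(x*) + ⟨y,x*⟩ + sup⟨K, x** − ŷ⟩, and consequently g_{y,K} is a strongly representative function on E × E*. -/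
open NormedSpace Set
open scoped Classical

noncomputable section

/-!
A weak*-compact `K` is weak*-closed and, by uniform boundedness, norm-bounded, so every supremum
over `K` below is finite. For the conjugate at `(φ, Φ)` with `φ ∈ K`, the bound
`φ (x - y) ≤ sup ⟨x - y, K⟩` controls the supremum, and the points `(y, k)`, `k ∈ K`, exhaust it.
If `φ ∉ K`, weak* Hahn–Banach separates `φ` from `K` by a weak*-continuous functional, that is,
by evaluation at some `x : E`, and moving along `y + t • x` drives the conjugate to `⊤`.
-/

section WeakStar

variable {E : Type*} [NormedAddCommGroup E] [NormedSpace ℝ E]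

theorem WeakDual.exists_apply_eq (f : WeakDual ℝ E →L[ℝ] ℝ) :
    ∃ x : E, ∀ k : WeakDual ℝ E, f k = k x := by
  obtain ⟨x, rfl⟩ := LinearMap.dualEmbedding_surjective (topDualPairing ℝ E) f
  exact ⟨x, fun _ => rfl⟩

theorem exists_forall_apply_lt_of_notMem {K : Set (StrongDual ℝ E)} (hKconv : Convex ℝ K)
    (hKcl : IsClosed (StrongDual.toWeakDual '' K)) {φ : StrongDual ℝ E} (hφ : φ ∉ K) :
    ∃ x : E, ∃ u : ℝ, (∀ k ∈ K, k x < u) ∧ u < φ x := by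
  have : LocallyConvexSpace ℝ (WeakDual ℝ E) := WeakBilin.locallyConvexSpace
  have hconv : Convex ℝ (StrongDual.toWeakDual '' K) :=
    hKconv.linear_image (StrongDual.toWeakDual (𝕜 := ℝ) (E := E)).toLinearMap
  obtain ⟨f, u, hK, hφ⟩ := geometric_hahn_banach_closed_point hconv hKcl
    (StrongDual.toWeakDual.injective.mem_set_image.not.2 hφ)
  obtain ⟨x, hx⟩ := WeakDual.exists_apply_eq f
  exact ⟨x, u, fun k hk => hx _ ▸ hK _ (mem_image_of_mem _ hk), hx _ ▸ hφ⟩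

theorem isBounded_of_isCompact_toWeakDual_image [CompleteSpace E] {K : Set (StrongDual ℝ E)}
    (hKcpt : IsCompact (StrongDual.toWeakDual '' K)) : Bornology.IsBounded K := by
  have := WeakDual.isBounded_iff_isVonNBounded.2 (hKcpt.isVonNBounded ℝ)
  rwa [← WeakDual.isBounded_toWeakDual_preimage_iff_isBounded,
    StrongDual.toWeakDual.injective.preimage_image] at this

theorem bddAbove_image_of_isBounded {F : Type*} [SeminormedAddCommGroup F] [NormedSpace ℝ F]
    {S : Set F} (hS : Bornology.IsBounded S) (φ : StrongDual ℝ F) : BddAbove (φ '' S) :=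
  (φ.lipschitz.isBounded_image hS).bddAbove

theorem bddAbove_image_eval {K : Set (StrongDual ℝ E)} (hKb : Bornology.IsBounded K) (x : E) :
    BddAbove ((fun k : StrongDual ℝ E => k x) '' K) :=
  bddAbove_image_of_isBounded hKb (inclusionInDoubleDual ℝ E x)

end WeakStar

theorem ConvexOn.econvexOn_ite_top {G : Type*} [AddCommGroup G] [Module ℝ G] {S : Set G}
    {h : G → ℝ} (hh : ConvexOn ℝ S h) :
    EConvexOn fun x => if x ∈ S then ((h x : ℝ) : EReal) else ⊤ := by
  intro x₁ x₂ a b ha hb hab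
  dsimp only
  rcases ha.eq_or_lt with rfl | ha
  · obtain rfl : b = 1 := by linarith
    simp
  rcases hb.eq_or_lt with rfl | hb
  · obtain rfl : a = 1 := by linarith
    simp
  have hne_bot : ∀ c : ℝ, 0 < c → ∀ x,
      (c : EReal) * (if x ∈ S then ((h x : ℝ) : EReal) else ⊤) ≠ ⊥ := fun c hc x =>
    (EReal.mul_ne_bot _ _).2 ⟨.inl (EReal.coe_ne_bot c), .inr (by split_ifs <;> simp),
      .inl (EReal.coe_ne_top c), .inl (EReal.coe_nonneg.2 hc.le)⟩
  by_cases hx₁ : x₁ ∈ S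
  · by_cases hx₂ : x₂ ∈ S
    · simp only [if_pos hx₁, if_pos hx₂, if_pos (hh.1 hx₁ hx₂ ha.le hb.le hab)]
      exact_mod_cast hh.2 hx₁ hx₂ ha.le hb.le hab
    · rw [if_neg hx₂, EReal.coe_mul_top_of_pos hb, EReal.add_top_of_ne_bot (hne_bot a ha x₁)]
      exact le_top
  · rw [if_neg hx₁, EReal.coe_mul_top_of_pos ha, EReal.top_add_of_ne_bot (hne_bot b hb x₂)]
    exact le_top

theorem LowerSemicontinuous.ite_top {X : Type*} [TopologicalSpace X] {S : Set X} {h : X → ℝ}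
    (hh : LowerSemicontinuous h) (hS : IsClosed S) :
    LowerSemicontinuous fun x => if x ∈ S then ((h x : ℝ) : EReal) else ⊤ := by
  have hcoe : LowerSemicontinuous fun x => ((h x : ℝ) : EReal) :=
    continuous_coe_real_ereal.comp_lowerSemicontinuous hh EReal.coe_strictMono.monotone
  intro x c hc
  dsimp only at hc ⊢
  by_cases hx : x ∈ S
  · rw [if_pos hx] at hc
    filter_upwards [hcoe x c hc] with x' hx'
    split_ifs
    · exact hx'
    · exact hx'.trans_le le_top
  · filter_upwards [hS.isOpen_compl.mem_nhds hx] with x' hx'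
    rw [if_neg hx] at hc
    rwa [if_neg hx']

section SupportFunction

variable {E : Type*} [NormedAddCommGroup E] [NormedSpace ℝ E] {K : Set (StrongDual ℝ E)}

theorem sSup_image_eval_smul_add_smul_le (hK : K.Nonempty) (hKb : Bornology.IsBounded K)
    (x x' : E) {a b : ℝ} (ha : 0 ≤ a) (hb : 0 ≤ b) :
    sSup ((fun k : StrongDual ℝ E => k (a • x + b • x')) '' K) ≤
      a * sSup ((fun k : StrongDual ℝ E => k x) '' K) +
        b * sSup ((fun k : StrongDual ℝ E => k x') '' K) := by
  refine csSup_le (hK.image _) ?_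
  rintro _ ⟨k, hk, rfl⟩
  simp only [map_add, map_smul, smul_eq_mul]
  gcongr
  · exact le_csSup (bddAbove_image_eval hKb x) (mem_image_of_mem _ hk)
  · exact le_csSup (bddAbove_image_eval hKb x') (mem_image_of_mem _ hk)

theorem lowerSemicontinuous_sSup_image_eval (hKb : Bornology.IsBounded K) :
    LowerSemicontinuous fun x : E => sSup ((fun k : StrongDual ℝ E => k x) '' K) := by
  simp_rw [image_eq_range]
  exact lowerSemicontinuous_ciSup
    (fun x => (bddAbove_image_eval hKb x).mono
      (range_subset_iff.2 fun k => mem_image_of_mem _ k.2))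
    fun k => (k : StrongDual ℝ E).continuous.lowerSemicontinuous

end SupportFunction

theorem IsClosed.of_isClosed_toWeakDual_image {E : Type*} [NormedAddCommGroup E]
    [NormedSpace ℝ E] {K : Set (StrongDual ℝ E)} (hK : IsClosed (StrongDual.toWeakDual '' K)) :
    IsClosed K := by
  simpa only [StrongDual.toWeakDual.injective.preimage_image] using
    hK.preimage Dual.toWeakDual_continuous

theorem sub_le_conj2 {E F : Type*} [NormedAddCommGroup E] [NormedSpace ℝ E]
    [NormedAddCommGroup F] [NormedSpace ℝ F] (f : E × F → EReal)
    (p : StrongDual ℝ E × StrongDual ℝ F) (q : E × F) :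
    ((p.1 q.1 + p.2 q.2 : ℝ) : EReal) - f q ≤ conj2 f p :=
  le_iSup (fun q : E × F => ((p.1 q.1 + p.2 q.2 : ℝ) : EReal) - f q) q

section GFun

variable {E : Type*} [NormedAddCommGroup E] [NormedSpace ℝ E] {y : E} {K : Set (StrongDual ℝ E)}

theorem gfun_of_mem {p : E × StrongDual ℝ E} (hp : p.2 ∈ K) :
    gfun y K p = ((sSup ((fun k : StrongDual ℝ E => k (p.1 - y)) '' K) + p.2 y : ℝ) : EReal) := by
  simp only [gfun, if_pos hp, add_zero, EReal.coe_add]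

theorem gfun_of_notMem {p : E × StrongDual ℝ E} (hp : p.2 ∉ K) : gfun y K p = ⊤ := by
  simp only [gfun, if_neg hp, EReal.coe_add_top, EReal.top_add_coe]

theorem gfun_eq_ite (y : E) (K : Set (StrongDual ℝ E)) :
    gfun y K = fun p => if p ∈ {p : E × StrongDual ℝ E | p.2 ∈ K} then
      ((sSup ((fun k : StrongDual ℝ E => k (p.1 - y)) '' K) + p.2 y : ℝ) : EReal) else ⊤ := by
  funext p
  split_ifs with hp
  exacts [gfun_of_mem hp, gfun_of_notMem hp]

theorem gfun_self_fst (hK : K.Nonempty) {k : StrongDual ℝ E} (hk : k ∈ K) :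
    gfun y K (y, k) = ((k y : ℝ) : EReal) := by
  simp only [gfun_of_mem (p := (y, k)) hk, sub_self, map_zero, hK.image_const, csSup_singleton,
    zero_add]

theorem properFun_gfun (hK : K.Nonempty) : ProperFun (gfun y K) := by
  obtain ⟨k, hk⟩ := hK
  refine ⟨⟨(y, k), by simp [gfun_self_fst ⟨k, hk⟩ hk]⟩, fun p => ?_⟩
  by_cases hp : p.2 ∈ K
  · simp [gfun_of_mem hp]
  · simp [gfun_of_notMem hp]

theorem econvexOn_gfun (hK : K.Nonempty) (hKconv : Convex ℝ K) (hKb : Bornology.IsBounded K) :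
    EConvexOn (gfun y K) := by
  rw [gfun_eq_ite]
  refine ConvexOn.econvexOn_ite_top ⟨hKconv.linear_preimage (LinearMap.snd ℝ E _), ?_⟩
  rintro ⟨x₁, u₁⟩ - ⟨x₂, u₂⟩ - a b ha hb hab
  have hy : a • x₁ + b • x₂ - y = a • (x₁ - y) + b • (x₂ - y) := by
    rw [smul_sub, smul_sub, ← add_sub_add_comm, ← add_smul, hab, one_smul]
  simp only [Prod.smul_mk, Prod.mk_add_mk, smul_eq_mul, hy, add_apply,
    FunLike.coe_smul, Pi.smul_apply]
  linarith [sSup_image_eval_smul_add_smul_le hK hKb (x₁ - y) (x₂ - y) ha hb]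

theorem lowerSemicontinuous_gfun (hKb : Bornology.IsBounded K) (hKcl : IsClosed K) :
    LowerSemicontinuous (gfun y K) := by
  rw [gfun_eq_ite]
  refine LowerSemicontinuous.ite_top ?_ (hKcl.preimage continuous_snd)
  refine ((lowerSemicontinuous_sSup_image_eval hKb).comp (by fun_prop)).add ?_
  exact ((ContinuousLinearMap.apply ℝ ℝ y).continuous.comp continuous_snd).lowerSemicontinuous

theorem apply_le_gfun (hKb : Bornology.IsBounded K) (p : E × StrongDual ℝ E) :
    ((p.2 p.1 : ℝ) : EReal) ≤ gfun y K p := by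
  by_cases hp : p.2 ∈ K
  · rw [gfun_of_mem hp, EReal.coe_le_coe_iff]
    have : p.2 (p.1 - y) ≤ sSup ((fun k : StrongDual ℝ E => k (p.1 - y)) '' K) :=
      le_csSup (bddAbove_image_eval hKb _) (mem_image_of_mem _ hp)
    rw [map_sub] at this
    linarith
  · simp [gfun_of_notMem hp]

theorem conj2_gfun_of_mem (hK : K.Nonempty) (hKb : Bornology.IsBounded K)
    {p : StrongDual ℝ E × StrongDual ℝ (StrongDual ℝ E)} (hp : p.1 ∈ K) :
    conj2 (gfun y K) p =
      ((p.1 y + sSup ((fun k : StrongDual ℝ E =>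
        (p.2 - inclusionInDoubleDual ℝ E y) k) '' K) : ℝ) : EReal) := by
  obtain ⟨φ, Φ⟩ := p
  set F := Φ - inclusionInDoubleDual ℝ E y
  have hF : ∀ k : StrongDual ℝ E, F k = Φ k - k y := fun _ => rfl
  have hFb : BddAbove ((fun k => F k) '' K) := bddAbove_image_of_isBounded hKb F
  apply le_antisymm
  · refine iSup_le fun ⟨x, u⟩ => ?_
    by_cases hu : u ∈ K
    · rw [gfun_of_mem hu, ← EReal.coe_sub, EReal.coe_le_coe_iff]
      have hφ : φ (x - y) ≤ sSup ((fun k : StrongDual ℝ E => k (x - y)) '' K) :=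
        le_csSup (bddAbove_image_eval hKb _) (mem_image_of_mem _ hp)
      have hu : F u ≤ sSup ((fun k => F k) '' K) := le_csSup hFb (mem_image_of_mem _ hu)
      rw [map_sub] at hφ
      rw [hF] at hu
      dsimp only
      linarith
    · simp [gfun_of_notMem (p := (x, u)) hu]
  · set g : ℝ → EReal := fun t => ((φ y + t : ℝ) : EReal)
    have hg : Continuous g := continuous_coe_real_ereal.comp (continuous_const_add _)
    have hmono : Monotone g := EReal.coe_strictMono.monotone.comp (monotone_id.const_add _)
    change g (sSup _) ≤ _
    rw [hmono.map_csSup_of_continuousAt hg.continuousAt (hK.image _) hFb, ← image_comp]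
    refine sSup_le ?_
    rintro _ ⟨k, hk, rfl⟩
    have := sub_le_conj2 (gfun y K) (φ, Φ) (y, k)
    rw [gfun_self_fst hK hk, ← EReal.coe_sub] at this
    refine (le_of_eq ?_).trans this
    rw [Function.comp_apply, hF]
    show ((φ y + (Φ k - k y) : ℝ) : EReal) = ((φ y + Φ k - k y : ℝ) : EReal)
    rw [add_sub_assoc]

theorem conj2_gfun_of_notMem (hK : K.Nonempty) (hKconv : Convex ℝ K)
    (hKcl : IsClosed (StrongDual.toWeakDual '' K))
    {p : StrongDual ℝ E × StrongDual ℝ (StrongDual ℝ E)} (hp : p.1 ∉ K) :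
    conj2 (gfun y K) p = ⊤ := by
  obtain ⟨φ, Φ⟩ := p
  obtain ⟨x, u, hKu, huφ⟩ := exists_forall_apply_lt_of_notMem hKconv hKcl hp
  obtain ⟨k, hk⟩ := hK
  -- along `(y + t • x, k)` the objective of the supremum grows like `t * (φ x - u)`
  have hray : ∀ t : ℝ, 0 ≤ t →
      ((φ y + Φ k - k y + t * (φ x - u) : ℝ) : EReal) ≤ conj2 (gfun y K) (φ, Φ) := by
    intro t ht
    have hσ : sSup ((fun k' : StrongDual ℝ E => k' (y + t • x - y)) '' K) ≤ t * u := by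
      refine csSup_le ⟨_, mem_image_of_mem _ hk⟩ ?_
      rintro _ ⟨k', hk', rfl⟩
      simp only [add_sub_cancel_left, map_smul, smul_eq_mul]
      exact mul_le_mul_of_nonneg_left (hKu k' hk').le ht
    have hg : gfun y K (y + t • x, k) ≤ ((t * u + k y : ℝ) : EReal) := by
      rw [gfun_of_mem (p := (y + t • x, k)) hk, EReal.coe_le_coe_iff]
      linarith
    refine le_trans ?_ ((EReal.sub_le_sub le_rfl hg).trans (sub_le_conj2 _ (φ, Φ) _))
    rw [← EReal.coe_sub, EReal.coe_le_coe_iff]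
    simp only [map_add, map_smul, smul_eq_mul]
    linarith
  refine (EReal.eq_top_iff_forall_lt _).2 fun r => ?_
  set c := φ y + Φ k - k y
  have hδ : 0 < φ x - u := sub_pos.2 huφ
  refine lt_of_lt_of_le ?_ (hray ((|r - c| + 1) / (φ x - u)) (by positivity))
  rw [EReal.coe_lt_coe_iff, div_mul_cancel₀ _ hδ.ne']
  linarith [le_abs_self (r - c)]

theorem conj2_gfun (hK : K.Nonempty) (hKconv : Convex ℝ K)
    (hKcl : IsClosed (StrongDual.toWeakDual '' K)) (hKb : Bornology.IsBounded K)
    (p : StrongDual ℝ E × StrongDual ℝ (StrongDual ℝ E)) :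
    conj2 (gfun y K) p =
      (if p.1 ∈ K then (0 : EReal) else ⊤) + ((p.1 y : ℝ) : EReal)
        + ((sSup ((fun k : StrongDual ℝ E =>
            (p.2 - inclusionInDoubleDual ℝ E y) k) '' K) : ℝ) : EReal) := by
  by_cases hp : p.1 ∈ K
  · rw [conj2_gfun_of_mem hK hKb hp, if_pos hp, zero_add, EReal.coe_add]
  · rw [conj2_gfun_of_notMem hK hKconv hKcl hp, if_neg hp, EReal.top_add_coe, EReal.top_add_coe]

theorem apply_le_conj2_gfun (hK : K.Nonempty) (hKconv : Convex ℝ K)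
    (hKcl : IsClosed (StrongDual.toWeakDual '' K)) (hKb : Bornology.IsBounded K)
    (p : StrongDual ℝ E × StrongDual ℝ (StrongDual ℝ E)) :
    ((p.2 p.1 : ℝ) : EReal) ≤ conj2 (gfun y K) p := by
  by_cases hp : p.1 ∈ K
  · rw [conj2_gfun_of_mem hK hKb hp, EReal.coe_le_coe_iff]
    have : (p.2 - inclusionInDoubleDual ℝ E y) p.1 ≤
        sSup ((fun k : StrongDual ℝ E => (p.2 - inclusionInDoubleDual ℝ E y) k) '' K) :=
      le_csSup (bddAbove_image_of_isBounded hKb _) (mem_image_of_mem _ hp)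
    rw [sub_apply, dual_def] at this
    linarith
  · simp [conj2_gfun_of_notMem hK hKconv hKcl hp]

theorem isStrongRep_gfun (hK : K.Nonempty) (hKconv : Convex ℝ K)
    (hKcl : IsClosed (StrongDual.toWeakDual '' K)) (hKb : Bornology.IsBounded K) :
    IsStrongRep (gfun y K) :=
  ⟨⟨properFun_gfun hK, econvexOn_gfun hK hKconv hKb,
      lowerSemicontinuous_gfun hKb hKcl.of_isClosed_toWeakDual_image, apply_le_gfun hKb⟩,
    apply_le_conj2_gfun hK hKconv hKcl hKb⟩

end GFun

theorem stmt6_general {E : Type*} [NormedAddCommGroup E] [NormedSpace ℝ E] [CompleteSpace E]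
    (y : E) (K : Set (StrongDual ℝ E)) (hK : K.Nonempty) (hKconv : Convex ℝ K)
    (hKcpt : IsCompact (StrongDual.toWeakDual '' K)) :
    (∀ p : StrongDual ℝ E × StrongDual ℝ (StrongDual ℝ E),
      conj2 (gfun y K) p =
        (if p.1 ∈ K then (0 : EReal) else ⊤) + ((p.1 y : ℝ) : EReal)
          + ((sSup ((fun k : StrongDual ℝ E =>
              (p.2 - inclusionInDoubleDual ℝ E y) k) '' K) : ℝ) : EReal)) ∧
    IsStrongRep (gfun y K) := by
  have hKb := isBounded_of_isCompact_toWeakDual_image hKcpt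
  exact ⟨conj2_gfun hK hKconv hKcpt.isClosed hKb, isStrongRep_gfun hK hKconv hKcpt.isClosed hKb⟩

theorem stmt6 {E : Type*} [NormedAddCommGroup E] [NormedSpace ℝ E] [CompleteSpace E] [Nontrivial E]
    (y : E) (K : Set (StrongDual ℝ E)) (hK : K.Nonempty) (hKconv : Convex ℝ K)
    (hKcpt : IsCompact (StrongDual.toWeakDual '' K)) :
    (∀ p : StrongDual ℝ E × StrongDual ℝ (StrongDual ℝ E),
      conj2 (gfun y K) p =
        (if p.1 ∈ K then (0 : EReal) else ⊤) + ((p.1 y : ℝ) : EReal)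
          + ((sSup ((fun k : StrongDual ℝ E =>
              (p.2 - inclusionInDoubleDual ℝ E y) k) '' K) : ℝ) : EReal)) ∧
    IsStrongRep (gfun y K) :=
  stmt6_general y K hK hKconv hKcpt
end
end

section
/- Let E be a nonzero Banach space and f a representative function on E × E* (proper, convex, lsc, with f(x,x*) ≥ ⟨x,x*⟩ everywhere). Then the multifunction Mf with graph {(x,x*) : f(x,x*) = ⟨x,x*⟩} is monotone: whenever f(x,x*) = ⟨x,x*⟩ and f(y,y*) = ⟨y,y*⟩, we have ⟨x − y, x* − y*⟩ ≥ 0. -/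
open NormedSpace Set
open scoped Classical

noncomputable section

/-! At the midpoint `m` of two points `(x, x*)`, `(y, y*)` of `E × E*` the pairing is
`(⟨x, x*⟩ + ⟨y, y*⟩)/2 - ⟨x - y, x* - y*⟩/4`. If both points lie on the graph of `Mf`, convexity
bounds `f m` by `(⟨x, x*⟩ + ⟨y, y*⟩)/2`, while `f m` dominates the pairing at `m`; together these
force `⟨x - y, x* - y*⟩ ≥ 0`. -/

theorem pairing_midpoint {E : Type*} [NormedAddCommGroup E] [NormedSpace ℝ E]
    (x y : E) (xs ys : StrongDual ℝ E) :
    (((1 / 2 : ℝ) • (x, xs) + (1 / 2 : ℝ) • (y, ys)).2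
        ((1 / 2 : ℝ) • (x, xs) + (1 / 2 : ℝ) • (y, ys)).1 : ℝ)
      = (xs x + ys y) / 2 - (xs - ys) (x - y) / 4 := by
  simp only [Prod.smul_mk, Prod.mk_add_mk, map_add, map_smul, add_apply,
    smul_apply, sub_apply, map_sub, smul_eq_mul]
  ring

theorem monoMF_mgraph {E : Type*} [NormedAddCommGroup E] [NormedSpace ℝ E]
    {f : E × StrongDual ℝ E → EReal} (hconv : EConvexOn f)
    (hge : ∀ p : E × StrongDual ℝ E, ((p.2 p.1 : ℝ) : EReal) ≤ f p) :
    MonoMF (Mgraph f) := by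
  intro x y xs ys (hx : f (x, xs) = _) (hy : f (y, ys) = _)
  have hmid : (((xs x + ys y) / 2 - (xs - ys) (x - y) / 4 : ℝ) : EReal)
      ≤ (((xs x + ys y) / 2 : ℝ) : EReal) :=
    calc (((xs x + ys y) / 2 - (xs - ys) (x - y) / 4 : ℝ) : EReal)
        ≤ f ((1 / 2 : ℝ) • (x, xs) + (1 / 2 : ℝ) • (y, ys)) := by
          rw [← pairing_midpoint]; exact hge _
      _ ≤ ((1 / 2 : ℝ) : EReal) * f (x, xs) + ((1 / 2 : ℝ) : EReal) * f (y, ys) :=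
          hconv _ _ _ _ (by norm_num) (by norm_num) (by norm_num)
      _ = (((xs x + ys y) / 2 : ℝ) : EReal) := by
          rw [hx, hy, ← EReal.coe_mul, ← EReal.coe_mul, ← EReal.coe_add]
          ring_nf
  linarith [EReal.coe_le_coe_iff.mp hmid]

theorem stmt9_general {E : Type*} [NormedAddCommGroup E] [NormedSpace ℝ E]
    (f : E × StrongDual ℝ E → EReal) (hf : IsRep f)
    (x y : E) (xs ys : StrongDual ℝ E)
    (hx : xs ∈ Mgraph f x) (hy : ys ∈ Mgraph f y) :
    0 ≤ (xs - ys) (x - y) :=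
  monoMF_mgraph hf.2.1 hf.2.2.2 x y xs ys hx hy

theorem stmt9 {E : Type*} [NormedAddCommGroup E] [NormedSpace ℝ E] [CompleteSpace E] [Nontrivial E]
    (f : E × StrongDual ℝ E → EReal) (hf : IsRep f)
    (x y : E) (xs ys : StrongDual ℝ E)
    (hx : xs ∈ Mgraph f x) (hy : ys ∈ Mgraph f y) :
    0 ≤ (xs - ys) (x - y) :=
  stmt9_general f hf x y xs ys hx hy
end
end

section
/- Let E be a nonzero Banach space, f a strongly representative function on E × E*, and (x,x*) ∈ E × E* with f(x,x*) = ⟨x,x*⟩. Then f*(x*, x̂) = ⟨x,x*⟩, where x̂ is the canonical image of x in E**. -/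
open NormedSpace Set
open scoped Classical

noncomputable section

/-! Testing `(x, x*)` in the supremum defining `f*` gives `f*(x*, x̂) ≥ ⟨x, x*⟩`. Conversely, for
`(y, y*)` with `f(y, y*) = r` finite, evaluating `f ≥ ⟨·,·⟩` at `λ(y, y*) + (1 - λ)(x, x*)` and
bounding `f` there by convexity gives, after division by `λ`,
`λ⟨y, y*⟩ + (1 - λ)(⟨y, x*⟩ + ⟨x, y*⟩ - ⟨x, x*⟩) ≤ r`; letting `λ → 0` yields
`⟨y, x*⟩ + ⟨x, y*⟩ - r ≤ ⟨x, x*⟩`. -/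

open Filter Topology

lemma le_of_forall_mul_add_one_sub_mul_le {a b r : ℝ}
    (h : ∀ l : ℝ, 0 < l → l ≤ 1 → l * a + (1 - l) * b ≤ r) : b ≤ r := by
  have hlim : Tendsto (fun l : ℝ => l * a + (1 - l) * b) (𝓝[>] 0) (𝓝 b) := by
    have hcont : Continuous (fun l : ℝ => l * a + (1 - l) * b) := by fun_prop
    simpa using hcont.tendsto 0 |>.mono_left nhdsWithin_le_nhds
  refine le_of_tendsto hlim ?_
  filter_upwards [Ioc_mem_nhdsGT one_pos] with l hl using h l hl.1 hl.2

section

variable {E : Type*} [NormedAddCommGroup E] [NormedSpace ℝ E]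

lemma snd_apply_fst_smul_add_smul (p q : E × StrongDual ℝ E) (a b : ℝ) :
    (a • p + b • q).2 (a • p + b • q).1
      = a ^ 2 * p.2 p.1 + a * b * (p.2 q.1 + q.2 p.1) + b ^ 2 * q.2 q.1 := by
  simp only [Prod.fst_add, Prod.snd_add, Prod.smul_fst, Prod.smul_snd, map_add, map_smul,
    add_apply, smul_apply, smul_eq_mul]
  ring

variable {f : E × StrongDual ℝ E → EReal}

lemma add_sub_le_of_econvexOn_of_pairing_le (hconv : EConvexOn f)
    (hrep : ∀ p : E × StrongDual ℝ E, ((p.2 p.1 : ℝ) : EReal) ≤ f p)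
    {x y : E} {xs ys : StrongDual ℝ E} (hx : f (x, xs) = ((xs x : ℝ) : EReal)) {r : ℝ}
    (hy : f (y, ys) = r) : xs y + ys x - xs x ≤ r := by
  refine le_of_forall_mul_add_one_sub_mul_le (a := ys y) fun l hl0 hl1 => ?_
  have hseg := (hrep _).trans (hconv (y, ys) (x, xs) l (1 - l) hl0.le (by linarith) (by ring))
  rw [hx, hy, snd_apply_fst_smul_add_smul] at hseg
  norm_cast at hseg
  have hscaled : l * (l * ys y + (1 - l) * (xs y + ys x - xs x)) ≤ l * r := by
    linear_combination hseg
  exact le_of_mul_le_mul_left hscaled hl0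

lemma conj2_inclusionInDoubleDual_eq_of_econvexOn (hconv : EConvexOn f)
    (hrep : ∀ p : E × StrongDual ℝ E, ((p.2 p.1 : ℝ) : EReal) ≤ f p)
    {x : E} {xs : StrongDual ℝ E} (hx : f (x, xs) = ((xs x : ℝ) : EReal)) :
    conj2 f (xs, inclusionInDoubleDual ℝ E x) = ((xs x : ℝ) : EReal) := by
  refine le_antisymm (iSup_le fun ⟨y, ys⟩ => ?_) (le_iSup_of_le (x, xs) ?_)
  · simp only [dual_def]
    rcases eq_or_ne (f (y, ys)) ⊤ with htop | htop
    · simp [htop]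
    have hbot : f (y, ys) ≠ ⊥ := ne_bot_of_le_ne_bot (EReal.coe_ne_bot _) (hrep _)
    rw [← EReal.coe_toReal htop hbot, ← EReal.coe_sub, EReal.coe_le_coe_iff]
    linarith [add_sub_le_of_econvexOn_of_pairing_le hconv hrep hx
      (EReal.coe_toReal htop hbot).symm]
  · simp only [dual_def, hx, ← EReal.coe_sub, add_sub_cancel_right, le_refl]

end

theorem stmt10_general {E : Type*} [NormedAddCommGroup E] [NormedSpace ℝ E]
    (f : E × StrongDual ℝ E → EReal) (hf : IsStrongRep f)
    (x : E) (xs : StrongDual ℝ E) (hx : f (x, xs) = ((xs x : ℝ) : EReal)) :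
    conj2 f (xs, inclusionInDoubleDual ℝ E x) = ((xs x : ℝ) : EReal) :=
  conj2_inclusionInDoubleDual_eq_of_econvexOn hf.1.2.1 hf.1.2.2.2 hx

theorem stmt10 {E : Type*} [NormedAddCommGroup E] [NormedSpace ℝ E] [CompleteSpace E] [Nontrivial E]
    (f : E × StrongDual ℝ E → EReal) (hf : IsStrongRep f)
    (x : E) (xs : StrongDual ℝ E) (hx : f (x, xs) = ((xs x : ℝ) : EReal)) :
    conj2 f (xs, inclusionInDoubleDual ℝ E x) = ((xs x : ℝ) : EReal) :=
  stmt10_general f hf x xs hx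
end
end

section
/- Let E be a nonzero Banach space and S : E ⇉ E* a monotone multifunction. Suppose that for every y ∈ E and every nonempty weak*-compact convex subset K of E*, the multifunction S + M_{y,K} is maximally monotone, where M_{y,K} is the multifunction with x* ∈ M_{y,K}(x) iff g_{y,K}(x,x*) = ⟨x,x*⟩ with g_{y,K}(x,x*) := sup⟨x−y,K⟩ + I_K(x*) + ⟨y,x*⟩. Then S is w(E*,E)-cc maximally monotone: for every y ∈ E and nonempty weak*-compact convex C ⊆ E*, if for every (s,s*) in the graph of S there exists y* ∈ C with ⟨s − y, s* − y*⟩ ≥ 0, then Sy ∩ C ≠ ∅. -/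
open NormedSpace Set
open scoped Classical

noncomputable section

/-!
Take `K := -C`. The hypothesis on `C` says exactly that `(y, 0)` is monotonically related to the
graph of `S + M_{y,K}`: an element of `M_{y,K}(s)` maximises `k ↦ k (s - y)` over `K`, so it beats
`-ys` for the `ys ∈ C` supplied by the hypothesis. Maximality puts `0` in `(S + M_{y,K})(y)`,
i.e. `0 = ss + ts` with `ss ∈ S y` and `ts ∈ K`, whence `ss = -ts ∈ C`.
-/

section

variable {E : Type*} [NormedAddCommGroup E] [NormedSpace ℝ E]

lemma bddAbove_image_apply_of_isCompact_toWeakDual {K : Set (StrongDual ℝ E)}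
    (hK : IsCompact (StrongDual.toWeakDual '' K)) (x : E) :
    BddAbove ((fun k : StrongDual ℝ E => k x) '' K) := by
  have := (hK.image (WeakDual.eval_continuous x)).bddAbove
  rwa [image_image] at this

lemma isCompact_toWeakDual_image_neg {C : Set (StrongDual ℝ E)}
    (hC : IsCompact (StrongDual.toWeakDual '' C)) :
    IsCompact (StrongDual.toWeakDual '' (-C)) := by
  rw [image_neg]
  exact hC.neg

variable {y s : E} {K : Set (StrongDual ℝ E)} {ts : StrongDual ℝ E}

lemma mem_of_mem_Mgraph_gfun (hts : ts ∈ Mgraph (gfun y K) s) : ts ∈ K := by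
  by_contra hK
  simp only [Mgraph, gfun, mem_ofPred_eq, hK, if_false,
    EReal.add_top_of_ne_bot (EReal.coe_ne_bot _),
    EReal.top_add_of_ne_bot (EReal.coe_ne_bot _)] at hts
  exact EReal.coe_ne_top _ hts.symm

lemma apply_le_of_mem_Mgraph_gfun (hK : IsCompact (StrongDual.toWeakDual '' K))
    (hts : ts ∈ Mgraph (gfun y K) s) {k : StrongDual ℝ E} (hk : k ∈ K) :
    k (s - y) ≤ ts (s - y) := by
  have hsup : sSup ((fun k : StrongDual ℝ E => k (s - y)) '' K) + ts y = ts s := by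
    simp only [Mgraph, gfun, mem_ofPred_eq, mem_of_mem_Mgraph_gfun hts, if_true, add_zero] at hts
    exact_mod_cast hts
  have hle : k (s - y) ≤ sSup ((fun k : StrongDual ℝ E => k (s - y)) '' K) :=
    le_csSup (bddAbove_image_apply_of_isCompact_toWeakDual hK (s - y)) ⟨k, hk, rfl⟩
  rw [map_sub ts]
  linarith

end

theorem stmt12_general {E : Type*} [NormedAddCommGroup E] [NormedSpace ℝ E]
    (S : E → Set (StrongDual ℝ E))
    (hmax : ∀ (y : E) (K : Set (StrongDual ℝ E)), K.Nonempty → Convex ℝ K →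
      IsCompact (StrongDual.toWeakDual '' K) →
      MaxMonoMF (fun x => {z : StrongDual ℝ E |
        ∃ ss ∈ S x, ∃ ts ∈ Mgraph (gfun y K) x, z = ss + ts})) :
    ∀ (y : E) (C : Set (StrongDual ℝ E)), C.Nonempty → Convex ℝ C →
      IsCompact (StrongDual.toWeakDual '' C) →
      (∀ (s : E) (ss : StrongDual ℝ E), ss ∈ S s → ∃ ys ∈ C, 0 ≤ (ss - ys) (s - y)) →
      (S y ∩ C).Nonempty := by
  intro y C hCne hCconv hCcomp hrel
  have hKcomp := isCompact_toWeakDual_image_neg hCcomp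
  obtain ⟨ss, hss, ts, hts, hsum⟩ := (hmax y (-C) hCne.neg hCconv.neg hKcomp).2 y 0 <| by
    rintro s _ ⟨ss, hss, ts, hts, rfl⟩
    obtain ⟨ys, hysC, hys⟩ := hrel s ss hss
    have hle := apply_le_of_mem_Mgraph_gfun hKcomp hts (k := -ys) (by simpa using hysC)
    simp only [sub_apply, add_apply, neg_apply, zero_apply, map_sub] at hys hle ⊢
    linarith
  refine ⟨ss, hss, ?_⟩
  simpa [eq_neg_of_add_eq_zero_left hsum.symm] using mem_of_mem_Mgraph_gfun hts

theorem stmt12 {E : Type*} [NormedAddCommGroup E] [NormedSpace ℝ E] [CompleteSpace E] [Nontrivial E]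
    (S : E → Set (StrongDual ℝ E)) (hS : MonoMF S)
    (hmax : ∀ (y : E) (K : Set (StrongDual ℝ E)), K.Nonempty → Convex ℝ K →
      IsCompact (StrongDual.toWeakDual '' K) →
      MaxMonoMF (fun x => {z : StrongDual ℝ E |
        ∃ ss ∈ S x, ∃ ts ∈ Mgraph (gfun y K) x, z = ss + ts})) :
    ∀ (y : E) (C : Set (StrongDual ℝ E)), C.Nonempty → Convex ℝ C →
      IsCompact (StrongDual.toWeakDual '' C) →
      (∀ (s : E) (ss : StrongDual ℝ E), ss ∈ S s → ∃ ys ∈ C, 0 ≤ (ss - ys) (s - y)) →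
      (S y ∩ C).Nonempty :=
  stmt12_general S hmax
end
end

section
/- Let E be a nonzero Banach space and S : E ⇉ E* a monotone multifunction. Suppose that for every nonempty weakly compact convex subset K of E and y* ∈ E*, the parallel sum S ∥ N_{K,y*} is maximally monotone, where N_{K,y*} is the multifunction with x* ∈ N_{K,y*}(x) iff I_K(x) + ⟨x,y*⟩ + sup⟨K, x* − y*⟩ = ⟨x,x*⟩. Then S is w(E,E*)-cc maximally monotone: for every nonempty weakly compact convex C ⊆ E and y* ∈ E*, if for every (s,s*) in the graph of S there exists w ∈ C with ⟨s − w, s* − y*⟩ ≥ 0, then S⁻¹y* ∩ C ≠ ∅. -/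
/-
Apply the maximality of `S ∥ N_{-C,y*}` at the point `(0, y*)`. If `s* ∈ S(s - v) ∩ N_{-C,y*}(v)`,
then `v` maximizes `s* - y*` over `-C`, and the hypothesis gives `w ∈ C` with
`⟨s - v - w, s* - y*⟩ ≥ 0`; since `⟨-w, s* - y*⟩ ≤ ⟨v, s* - y*⟩`, this yields `⟨s, s* - y*⟩ ≥ 0`,
so `(0, y*)` is monotonically related to the graph of the parallel sum. Hence
`y* ∈ S(-v) ∩ N_{-C,y*}(v)` for some `v`, and `-v ∈ S⁻¹y* ∩ C`.
-/

open NormedSpace Set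
open scoped Classical

noncomputable section

section

variable {E : Type*} [NormedAddCommGroup E] [NormedSpace ℝ E]

lemma bddAbove_image_of_isCompact_toWeakSpace {K : Set E}
    (hK : IsCompact (toWeakSpace ℝ E '' K)) (φ : StrongDual ℝ E) : BddAbove (φ '' K) := by
  have hφ : Continuous fun w : WeakSpace ℝ E => (topDualPairing ℝ E).flip w φ :=
    WeakBilin.eval_continuous _ φ
  have h := (hK.image hφ).bddAbove
  rwa [image_image] at h

lemma isCompact_toWeakSpace_neg {C : Set E} (hC : IsCompact (toWeakSpace ℝ E '' C)) :
    IsCompact (toWeakSpace ℝ E '' (-C)) := by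
  rw [image_neg]
  exact hC.neg

lemma isMaxOn_of_mem_Mgraph_hfun {K : Set E} (hK : IsCompact (toWeakSpace ℝ E '' K)) {v : E}
    {xs ys : StrongDual ℝ E} (h : xs ∈ Mgraph (hfun K ys) v) :
    v ∈ K ∧ IsMaxOn (xs - ys) K v := by
  simp only [Mgraph, hfun, mem_ofPred_eq] at h
  by_cases hv : v ∈ K
  · rw [if_pos hv, zero_add, ← EReal.coe_add, EReal.coe_eq_coe_iff] at h
    refine ⟨hv, fun w hw => ?_⟩
    have hle : (xs - ys) w ≤ sSup ((fun k => (xs - ys) k) '' K) :=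
      le_csSup (bddAbove_image_of_isCompact_toWeakSpace hK _) (mem_image_of_mem _ hw)
    change (xs - ys) w ≤ xs v - ys v
    linarith
  · rw [if_neg hv, EReal.top_add_coe, EReal.top_add_coe] at h
    exact absurd h (EReal.coe_ne_top _).symm

lemma monotonicallyRelated_parSum_hfun_neg {S : E → Set (StrongDual ℝ E)} {C : Set E}
    (hC : IsCompact (toWeakSpace ℝ E '' C)) {ys : StrongDual ℝ E}
    (hrel : ∀ s ss, ss ∈ S s → ∃ w ∈ C, 0 ≤ (ss - ys) (s - w))
    {s : E} {ss : StrongDual ℝ E} (hss : ss ∈ parSum S (Mgraph (hfun (-C) ys)) s) :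
    0 ≤ (ys - ss) (0 - s) := by
  obtain ⟨v, hsS, hsN⟩ := hss
  obtain ⟨-, hvmax⟩ := isMaxOn_of_mem_Mgraph_hfun (isCompact_toWeakSpace_neg hC) hsN
  obtain ⟨w, hw, hge⟩ := hrel (s - v) ss hsS
  have hwv : (ss - ys) (-w) ≤ (ss - ys) v := hvmax (neg_mem_neg.mpr hw)
  simp only [sub_apply, map_sub, map_neg, zero_sub] at hge hwv ⊢
  linarith

end

theorem stmt13_general {E : Type*} [NormedAddCommGroup E] [NormedSpace ℝ E]
    (S : E → Set (StrongDual ℝ E))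
    (hmax : ∀ (K : Set E) (ys : StrongDual ℝ E), K.Nonempty → Convex ℝ K →
      IsCompact (toWeakSpace ℝ E '' K) →
      MaxMonoMF (parSum S (Mgraph (hfun K ys)))) :
    ∀ (C : Set E) (ys : StrongDual ℝ E), C.Nonempty → Convex ℝ C →
      IsCompact (toWeakSpace ℝ E '' C) →
      (∀ (s : E) (ss : StrongDual ℝ E), ss ∈ S s → ∃ w ∈ C, 0 ≤ (ss - ys) (s - w)) →
      ({s : E | ys ∈ S s} ∩ C).Nonempty := by
  intro C ys hne hconv hC hrel
  have hnegC := isCompact_toWeakSpace_neg hC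
  obtain ⟨-, hmaximal⟩ := hmax (-C) ys hne.neg hconv.neg hnegC
  obtain ⟨v, hvS, hvN⟩ := hmaximal 0 ys fun s ss hss =>
    monotonicallyRelated_parSum_hfun_neg hC hrel hss
  obtain ⟨hvC, -⟩ := isMaxOn_of_mem_Mgraph_hfun hnegC hvN
  exact ⟨-v, by simpa using hvS, hvC⟩

theorem stmt13 {E : Type*} [NormedAddCommGroup E] [NormedSpace ℝ E] [CompleteSpace E] [Nontrivial E]
    (S : E → Set (StrongDual ℝ E)) (hS : MonoMF S)
    (hmax : ∀ (K : Set E) (ys : StrongDual ℝ E), K.Nonempty → Convex ℝ K →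
      IsCompact (toWeakSpace ℝ E '' K) →
      MaxMonoMF (parSum S (Mgraph (hfun K ys)))) :
    ∀ (C : Set E) (ys : StrongDual ℝ E), C.Nonempty → Convex ℝ C →
      IsCompact (toWeakSpace ℝ E '' C) →
      (∀ (s : E) (ss : StrongDual ℝ E), ss ∈ S s → ∃ w ∈ C, 0 ≤ (ss - ys) (s - w)) →
      ({s : E | ys ∈ S s} ∩ C).Nonempty :=
  stmt13_general S hmax
end
end

section
/- Let E, F be nonzero Banach spaces, A ∈ L(E,F), f, g strongly representative functions on E × E* and F × F*. Suppose there exists a closed subspace H of F with D(Mg) − A[D(Mf)] ⊆ H ⊆ ⋃_{λ>0} λ[π_F dom g − A(π_E dom f)]. Then ⋃_{λ>0} λ[π_F dom g − A(π_E dom f)] = H (in particular it is a closed subspace of F). -/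
open NormedSpace Set
open scoped Classical

noncomputable section

/-! If `f` is strongly representative and `(a, b) ∈ dom f`, the pairing gap `f - ⟨·,·⟩` can be made
arbitrarily small near `(a, b)` (Brøndsted–Rockafellar). Indeed the concave quadratic
`(z, w) ↦ ⟨w, z⟩ - (⟨w - b, z - a⟩ + t/2 ‖z - a‖² + t⁻¹/2 ‖w - b‖²)` lies below the pairing, hence
below `f`; a Hahn–Banach sandwich puts an affine function between the two, and strong
representativity applied to its slope shows that `f` comes within any `δ > 0` of the quadratic,
at a point whose distance to `(a, b)` is controlled by the gap at `(a, b)`. Iterating with gaps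
decreasing geometrically gives a Cauchy sequence whose limit lies on the graph of `M_f`, so
`π_E dom f ⊆ closure D(M_f)`, and likewise for `g`. Hence `π_F dom g - A (π_E dom f)` lies in
the closure of `D(M_g) - A D(M_f)`, which is contained in the closed subspace `H`, and so do its
positive multiples. -/

section Sandwich

variable {X : Type*} [NormedAddCommGroup X] [NormedSpace ℝ X]

theorem EConvexOn.convex_epigraph {f : X → EReal} (hf : EConvexOn f) (hbot : ∀ x, f x ≠ ⊥) :
    Convex ℝ {p : X × ℝ | f p.1 ≤ p.2} := by
  rintro ⟨x, c⟩ hx ⟨y, d⟩ hy a b ha hb hab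
  obtain ⟨fx, hfx⟩ : ∃ r : ℝ, f x = r :=
    ⟨_, (EReal.coe_toReal (ne_top_of_le_ne_top (EReal.coe_ne_top c) hx) (hbot x)).symm⟩
  obtain ⟨fy, hfy⟩ : ∃ r : ℝ, f y = r :=
    ⟨_, (EReal.coe_toReal (ne_top_of_le_ne_top (EReal.coe_ne_top d) hy) (hbot y)).symm⟩
  simp only [mem_ofPred_eq, hfx, hfy, EReal.coe_le_coe_iff] at hx hy ⊢
  calc f (a • x + b • y) ≤ (a : EReal) * f x + (b : EReal) * f y := hf x y a b ha hb hab
    _ = ((a * fx + b * fy : ℝ) : EReal) := by rw [hfx, hfy]; norm_cast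
    _ ≤ ((a * c + b * d : ℝ) : EReal) := by gcongr

theorem EConvexOn.exists_affine_between {f : X → EReal} (hf : EConvexOn f) (hfp : ProperFun f)
    {φ : X → ℝ} (hφc : Continuous φ) (hφ : ConcaveOn ℝ univ φ) (hφf : ∀ x, (φ x : EReal) ≤ f x) :
    ∃ (ξ : StrongDual ℝ X) (r : ℝ), (∀ x, φ x ≤ ξ x + r) ∧
      ∀ x, ((ξ x + r : ℝ) : EReal) ≤ f x := by
  obtain ⟨⟨x₀, hx₀⟩, hbot⟩ := hfp
  have hs_open : IsOpen {p : X × ℝ | p.2 < φ p.1} :=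
    isOpen_lt continuous_snd (hφc.comp continuous_fst)
  have hs_conv : Convex ℝ {p : X × ℝ | p.2 < φ p.1} := by
    simpa using hφ.convex_strict_hypograph
  have hst : Disjoint {p : X × ℝ | p.2 < φ p.1} {p : X × ℝ | f p.1 ≤ p.2} :=
    Set.disjoint_left.2 fun p hps hpt =>
      (EReal.coe_lt_coe_iff.2 hps).not_ge ((hφf p.1).trans hpt)
  obtain ⟨F, u, hFs, hFt⟩ :=
    geometric_hahn_banach_open hs_conv hs_open (hf.convex_epigraph hbot) hst
  set k := F (0, 1)
  have hF : ∀ x c, F (x, c) = F (x, 0) + c * k := fun x c => by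
    rw [show ((x, c) : X × ℝ) = (x, 0) + c • (0, 1) by simp, map_add, map_smul, smul_eq_mul,
      mul_comm]
  have hlt : ∀ x c, c < φ x → F (x, 0) + c * k < u := fun x c hc => hF x c ▸ hFs (x, c) hc
  have hge : ∀ x (c : ℝ), f x ≤ c → u ≤ F (x, 0) + c * k := fun x c hc =>
    hF x c ▸ hFt (x, c) hc
  -- a separating hyperplane through the graph of `f` at `x₀` cannot be vertical
  have hk : 0 < k := by
    by_contra! hk
    set c := (f x₀).toReal
    have h₁ := hlt x₀ (min (φ x₀) c - 1) (by linarith [min_le_left (φ x₀) c])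
    have h₂ := hge x₀ c (EReal.le_coe_toReal hx₀)
    nlinarith [min_le_right (φ x₀) c]
  have hξ : ∀ x, (-k⁻¹ • F.comp (ContinuousLinearMap.inl ℝ X ℝ)) x + u / k = (u - F (x, 0)) / k :=
    fun x => by simp; ring
  refine ⟨-k⁻¹ • F.comp (ContinuousLinearMap.inl ℝ X ℝ), u / k, fun x => ?_, fun x => ?_⟩
  · rw [hξ]
    refine le_of_forall_lt fun c hc => ?_
    rw [lt_div_iff₀ hk]
    linarith [hlt x c hc]
  · rcases eq_or_ne (f x) ⊤ with h | h
    · simp [h]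
    · rw [hξ, ← EReal.coe_toReal h (hbot x), EReal.coe_le_coe_iff, div_le_iff₀ hk]
      linarith [hge x _ (EReal.le_coe_toReal h)]

end Sandwich

theorem ContinuousLinearMap.half_inv_mul_sq_norm_le_of_forall {X : Type*}
    [NormedAddCommGroup X] [NormedSpace ℝ X] (c : StrongDual ℝ X) {t M : ℝ} (ht : 0 < t)
    (h : ∀ s, c s - t / 2 * ‖s‖ ^ 2 ≤ M) : t⁻¹ / 2 * ‖c‖ ^ 2 ≤ M := by
  have hM : 0 ≤ M := by simpa using h 0
  have hbound : ‖c‖ ≤ √(2 * t * M) := by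
    refine c.opNorm_le_bound (Real.sqrt_nonneg _) fun x => ?_
    rcases eq_or_ne x 0 with rfl | hx
    · simp
    have hx' : 0 < ‖x‖ := norm_pos_iff.2 hx
    -- test `h` at the maximiser of `λ ↦ λ c x - t λ² ‖x‖² / 2`
    have hmax := h ((c x / (t * ‖x‖ ^ 2)) • x)
    rw [map_smul, smul_eq_mul, norm_smul, Real.norm_eq_abs, mul_pow, sq_abs] at hmax
    have hsq : c x ^ 2 ≤ 2 * t * M * ‖x‖ ^ 2 := by
      have e : c x / (t * ‖x‖ ^ 2) * c x - t / 2 * ((c x / (t * ‖x‖ ^ 2)) ^ 2 * ‖x‖ ^ 2)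
          = c x ^ 2 / (2 * t * ‖x‖ ^ 2) := by field_simp; ring
      rw [e, div_le_iff₀ (by positivity)] at hmax
      linarith
    refine abs_le_of_sq_le_sq ?_ (by positivity)
    rwa [mul_pow, Real.sq_sqrt (by positivity)]
  calc t⁻¹ / 2 * ‖c‖ ^ 2 ≤ t⁻¹ / 2 * √(2 * t * M) ^ 2 := by gcongr
    _ = M := by rw [Real.sq_sqrt (by positivity)]; field_simp

theorem mul_le_half_mul_sq_add_half_inv_mul_sq {t : ℝ} (ht : 0 < t) (x y : ℝ) :
    x * y ≤ t / 2 * x ^ 2 + t⁻¹ / 2 * y ^ 2 := by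
  have h : 0 ≤ (t * x - y) ^ 2 / (2 * t) := by positivity
  have e : (t * x - y) ^ 2 / (2 * t) = t / 2 * x ^ 2 + t⁻¹ / 2 * y ^ 2 - x * y := by
    field_simp; ring
  linarith

theorem le_two_mul_of_quadratic_le {m n x y C δ t r : ℝ} (ht : 0 < t) (hr : 0 ≤ r)
    (hconj : t⁻¹ / 2 * m ^ 2 + t / 2 * n ^ 2 ≤ C) (hC : C ≤ t * r ^ 2 / 2) (hδ : δ ≤ t * r ^ 2 / 2)
    (h : -(m * x) - n * y + C + (t / 2 * x ^ 2 + t⁻¹ / 2 * y ^ 2) ≤ δ) :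
    x ≤ 2 * r ∧ y ≤ 2 * t * r := by
  have htr : 0 ≤ t * r := by positivity
  have hmn : m ^ 2 + (t * n) ^ 2 ≤ 2 * t * C := by
    have e : m ^ 2 + (t * n) ^ 2 = 2 * t * (t⁻¹ / 2 * m ^ 2 + t / 2 * n ^ 2) := by field_simp
    rw [e]; gcongr
  have hxy : (t * x - m) ^ 2 + (y - t * n) ^ 2 ≤ 2 * t * δ := by
    have e : (t * x - m) ^ 2 + (y - t * n) ^ 2 =
        2 * t * (-(m * x) - n * y + (t / 2 * x ^ 2 + t⁻¹ / 2 * y ^ 2)) + (m ^ 2 + (t * n) ^ 2) := by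
      field_simp; ring
    nlinarith [mul_le_mul_of_nonneg_left h (by positivity : (0 : ℝ) ≤ 2 * t)]
  have hm := (abs_le_of_sq_le_sq' (a := m) (by nlinarith [sq_nonneg (t * n)]) htr).2
  have hn := (abs_le_of_sq_le_sq' (a := t * n) (by nlinarith [sq_nonneg m]) htr).2
  have hx := (abs_le_of_sq_le_sq' (a := t * x - m) (by nlinarith [sq_nonneg (y - t * n)]) htr).2
  have hy := (abs_le_of_sq_le_sq' (a := y - t * n) (by nlinarith [sq_nonneg (t * x - m)]) htr).2
  exact ⟨le_of_mul_le_mul_left (by linarith) ht, by linarith⟩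

open Filter Topology in
theorem LowerSemicontinuous.exists_eq_of_forall_exists_near {X Y : Type*}
    [PseudoMetricSpace X] [CompleteSpace X] [PseudoMetricSpace Y] [CompleteSpace Y] {f : X × Y → EReal} (hf : LowerSemicontinuous f)
    {q : X × Y → ℝ} (hq : Continuous q) (hqf : ∀ p, (q p : EReal) ≤ f p) {ε d e : ℕ → ℝ}
    (hε : Tendsto ε atTop (𝓝 0)) (hd : Summable d) (he : Summable e)
    (hstep : ∀ n p, f p ≤ ((q p + ε n : ℝ) : EReal) → ∃ p', f p' ≤ ((q p' + ε (n + 1) : ℝ) : EReal)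
      ∧ dist p.1 p'.1 ≤ d n ∧ dist p.2 p'.2 ≤ e n)
    {p₀ : X × Y} (hp₀ : f p₀ ≤ ((q p₀ + ε 0 : ℝ) : EReal)) :
    ∃ p, f p = q p ∧ dist p₀.1 p.1 ≤ ∑' n, d n := by
  choose! next hnext hnext₁ hnext₂ using hstep
  let u : ℕ → X × Y := fun n => Nat.rec p₀ next n
  have hu : ∀ n, f (u n) ≤ ((q (u n) + ε n : ℝ) : EReal) := fun n =>
    Nat.rec hp₀ (fun n ih => hnext n (u n) ih) n
  have hdist : ∀ n, dist (u n) (u (n + 1)) ≤ d n + e n := fun n => by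
    have h₁ := hnext₁ n _ (hu n)
    have h₂ := hnext₂ n _ (hu n)
    rw [Prod.dist_eq]
    exact max_le (by linarith [dist_nonneg.trans h₂]) (by linarith [dist_nonneg.trans h₁])
  obtain ⟨l, hl⟩ :=
    cauchySeq_tendsto_of_complete (cauchySeq_of_dist_le_of_summable _ hdist (hd.add he))
  refine ⟨l, le_antisymm ?_ (hqf l), ?_⟩
  · by_contra! hlt
    obtain ⟨c, hqc, hcf⟩ := EReal.lt_iff_exists_real_btwn.1 hlt
    have hlim : Tendsto (fun n => q (u n) + ε n) atTop (𝓝 (q l)) := by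
      simpa using ((hq.tendsto l).comp hl).add hε
    obtain ⟨n, hn₁, hn₂⟩ := ((hlim.eventually_lt_const (EReal.coe_lt_coe_iff.1 hqc)).and
      (hl.eventually (hf l c hcf))).exists
    exact (hu n).not_gt ((EReal.coe_lt_coe_iff.2 hn₁).trans hn₂)
  · exact dist_le_tsum_of_dist_le_of_tendsto₀ d (fun n => hnext₁ n _ (hu n)) hd
      ((continuous_fst.tendsto l).comp hl)

section StrongRep

variable {E : Type*} [NormedAddCommGroup E] [NormedSpace ℝ E]

def quadMinorant (a : E) (b : StrongDual ℝ E) (t : ℝ) (p : E × StrongDual ℝ E) : ℝ :=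
  p.2 a + b p.1 - b a - (t / 2 * ‖p.1 - a‖ ^ 2 + t⁻¹ / 2 * ‖p.2 - b‖ ^ 2)

theorem quadMinorant_le_pairing (a : E) (b : StrongDual ℝ E) {t : ℝ} (ht : 0 < t)
    (p : E × StrongDual ℝ E) : quadMinorant a b t p ≤ p.2 p.1 := by
  have hpair : (p.2 - b) (p.1 - a) = p.2 p.1 - (p.2 a + b p.1 - b a) := by simp; ring
  have hop : -(‖p.2 - b‖ * ‖p.1 - a‖) ≤ (p.2 - b) (p.1 - a) :=
    neg_le_of_abs_le ((p.2 - b).le_opNorm _)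
  have hamgm := mul_le_half_mul_sq_add_half_inv_mul_sq ht ‖p.1 - a‖ ‖p.2 - b‖
  unfold quadMinorant
  linarith

theorem continuous_quadMinorant (a : E) (b : StrongDual ℝ E) (t : ℝ) :
    Continuous (quadMinorant a b t) := by
  unfold quadMinorant
  fun_prop

theorem convexOn_univ_norm_sub_sq {V : Type*} [NormedAddCommGroup V] [NormedSpace ℝ V] (v : V) :
    ConvexOn ℝ univ fun x : V => ‖x - v‖ ^ 2 := by
  have := (convexOn_univ_norm.pow (fun _ _ => norm_nonneg _) 2).translate_right (-v)
  exact this.congr fun x _ => by simp [sub_eq_neg_add]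

theorem concaveOn_quadMinorant (a : E) (b : StrongDual ℝ E) {t : ℝ} (ht : 0 ≤ t) :
    ConcaveOn ℝ univ (quadMinorant a b t) := by
  have hlin : ConcaveOn ℝ univ fun p : E × StrongDual ℝ E => p.2 a + b p.1 :=
    ((ContinuousLinearMap.apply ℝ ℝ a).comp (ContinuousLinearMap.snd ℝ E _)
      + b.comp (ContinuousLinearMap.fst ℝ E _)).toLinearMap.concaveOn convex_univ
  have hquad : ConvexOn ℝ univ fun p : E × StrongDual ℝ E =>
      t / 2 * ‖p.1 - a‖ ^ 2 + t⁻¹ / 2 * ‖p.2 - b‖ ^ 2 := by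
    have h₁ := (convexOn_univ_norm_sub_sq a).comp_linearMap (LinearMap.fst ℝ E (StrongDual ℝ E))
    have h₂ := (convexOn_univ_norm_sub_sq b).comp_linearMap (LinearMap.snd ℝ E (StrongDual ℝ E))
    exact (h₁.smul (by positivity : (0 : ℝ) ≤ t / 2)).add
      (h₂.smul (by positivity : (0 : ℝ) ≤ t⁻¹ / 2))
  exact (hlin.add_const (-b a)).sub hquad |>.congr fun p _ => by simp [quadMinorant]; ring

theorem IsStrongRep.exists_affine_minorant {f : E × StrongDual ℝ E → EReal} (hf : IsStrongRep f)
    (a : E) (b : StrongDual ℝ E) {t : ℝ} (ht : 0 < t) (σ : ℝ)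
    (hle : ∀ p, ((quadMinorant a b t p + σ : ℝ) : EReal) ≤ f p) :
    ∃ (us : StrongDual ℝ E) (uss : StrongDual ℝ (StrongDual ℝ E)) (C : ℝ),
      t⁻¹ / 2 * ‖us‖ ^ 2 + t / 2 * ‖uss‖ ^ 2 ≤ C - σ ∧ uss us ≤ -C ∧
      ∀ p : E × StrongDual ℝ E,
        ((us (p.1 - a) + uss (p.2 - b) + C + (p.2 a + b p.1 - b a) : ℝ) : EReal) ≤ f p := by
  obtain ⟨ξ, r, hup, hdown⟩ := hf.1.2.1.exists_affine_between hf.1.1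
    ((continuous_quadMinorant a b t).add continuous_const)
    ((concaveOn_quadMinorant a b ht.le).add_const σ) hle
  set c₁ := ξ.comp (ContinuousLinearMap.inl ℝ E (StrongDual ℝ E))
  set c₂ := ξ.comp (ContinuousLinearMap.inr ℝ E (StrongDual ℝ E))
  have hξ : ∀ p, ξ p = c₁ p.1 + c₂ p.2 := fun p => (ξ.comp_inl_add_comp_inr p).symm
  set us := c₁ - b
  set uss := c₂ - inclusionInDoubleDual ℝ E a
  set C := r + c₁ a + c₂ b - b a
  have hid : ∀ p : E × StrongDual ℝ E,
      us (p.1 - a) + uss (p.2 - b) + C + (p.2 a + b p.1 - b a) = ξ p + r := fun p => by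
    simp [us, uss, C, hξ]; ring
  refine ⟨us, uss, C, ?_, ?_, fun p => hid p ▸ hdown p⟩
  · have hconj : ∀ s u, (-us) s - t / 2 * ‖s‖ ^ 2 + ((-uss) u - t⁻¹ / 2 * ‖u‖ ^ 2) ≤ C - σ :=
      fun s u => by
        have h := hup (a + s, b + u)
        rw [← hid] at h
        simp only [Pi.add_apply, quadMinorant, add_sub_cancel_left, map_add,
          add_apply, neg_apply] at h ⊢
        linarith
    have hus : ∀ u, t⁻¹ / 2 * ‖us‖ ^ 2 ≤ C - σ - ((-uss) u - t⁻¹ / 2 * ‖u‖ ^ 2) := fun u =>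
      norm_neg us ▸ (-us).half_inv_mul_sq_norm_le_of_forall ht fun s => by
        linarith [hconj s u]
    have huss := norm_neg uss ▸ (-uss).half_inv_mul_sq_norm_le_of_forall (inv_pos.2 ht)
      (M := C - σ - t⁻¹ / 2 * ‖us‖ ^ 2) fun u => by linarith [hus u]
    rw [inv_inv] at huss
    linarith
  · have hconj : conj2 f (c₁, c₂) ≤ ((-r : ℝ) : EReal) := iSup_le fun q => by
      refine EReal.sub_le_of_le_add ?_
      calc ((c₁ q.1 + c₂ q.2 : ℝ) : EReal) = ((-r : ℝ) : EReal) + ((ξ q + r : ℝ) : EReal) := by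
            rw [hξ, ← EReal.coe_add]; ring_nf
        _ ≤ _ := add_le_add_right (hdown q) _
    have hstrong := EReal.coe_le_coe_iff.1 ((hf.2 (c₁, c₂)).trans hconj)
    have e : uss us = c₂ c₁ - c₂ b - c₁ a + b a := by simp [us, uss]; ring
    simp only [C]
    linarith

theorem IsStrongRep.exists_le_quadMinorant_add {f : E × StrongDual ℝ E → EReal}
    (hf : IsStrongRep f) (a : E) (b : StrongDual ℝ E) {t δ : ℝ} (ht : 0 < t) (hδ : 0 < δ) :
    ∃ p, f p ≤ ((quadMinorant a b t p + δ : ℝ) : EReal) := by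
  by_contra! h
  obtain ⟨us, uss, C, hconj, hstrong, -⟩ := hf.exists_affine_minorant a b ht δ fun p => (h p).le
  have hop : -(‖uss‖ * ‖us‖) ≤ uss us := neg_le_of_abs_le (uss.le_opNorm us)
  have hamgm := mul_le_half_mul_sq_add_half_inv_mul_sq (inv_pos.2 ht) ‖us‖ ‖uss‖
  rw [inv_inv] at hamgm
  linarith

theorem IsStrongRep.exists_near_coincidence {f : E × StrongDual ℝ E → EReal} (hf : IsStrongRep f)
    {p : E × StrongDual ℝ E} {t r δ : ℝ} (ht : 0 < t) (hr : 0 ≤ r)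
    (hp : f p ≤ ((p.2 p.1 + t * r ^ 2 / 2 : ℝ) : EReal)) (hδ : 0 < δ) (hδr : δ ≤ t * r ^ 2 / 2) :
    ∃ p', f p' ≤ ((p'.2 p'.1 + δ : ℝ) : EReal) ∧ dist p.1 p'.1 ≤ 2 * r ∧
      dist p.2 p'.2 ≤ 2 * t * r := by
  obtain ⟨us, uss, C, hconj, -, hmin⟩ := hf.exists_affine_minorant p.1 p.2 ht 0 fun p' => by
    simpa using
      (EReal.coe_le_coe_iff.2 (quadMinorant_le_pairing p.1 p.2 ht p')).trans (hf.1.2.2.2 p')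
  obtain ⟨p', hp'⟩ := hf.exists_le_quadMinorant_add p.1 p.2 ht hδ
  have hC : C ≤ t * r ^ 2 / 2 := by
    have := EReal.coe_le_coe_iff.1 ((hmin p).trans hp)
    simp only [sub_self, map_zero] at this
    linarith
  have hnear := EReal.coe_le_coe_iff.1 ((hmin p').trans hp')
  unfold quadMinorant at hnear
  have h₁ : -(‖us‖ * ‖p'.1 - p.1‖) ≤ us (p'.1 - p.1) := neg_le_of_abs_le (us.le_opNorm _)
  have h₂ : -(‖uss‖ * ‖p'.2 - p.2‖) ≤ uss (p'.2 - p.2) := neg_le_of_abs_le (uss.le_opNorm _)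
  obtain ⟨hz, hw⟩ := le_two_mul_of_quadratic_le (x := ‖p'.1 - p.1‖) (y := ‖p'.2 - p.2‖) ht hr
    (by simpa using hconj) hC hδr (by linarith)
  refine ⟨p', hp'.trans (EReal.coe_le_coe_iff.2 ?_), ?_, ?_⟩
  · linarith [quadMinorant_le_pairing p.1 p.2 ht p']
  · rwa [dist_comm, dist_eq_norm]
  · rwa [dist_comm, dist_eq_norm]

end StrongRep

theorem IsStrongRep.mem_closure_dom_Mgraph {E : Type*} [NormedAddCommGroup E] [NormedSpace ℝ E]
    [CompleteSpace E] {f : E × StrongDual ℝ E → EReal} (hf : IsStrongRep f)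
    {p : E × StrongDual ℝ E} (hp : f p ≠ ⊤) : p.1 ∈ closure {x | (Mgraph f x).Nonempty} := by
  refine Metric.mem_closure_iff.2 fun ε hε => ?_
  obtain ⟨η, hη, hpη⟩ : ∃ η : ℝ, 0 < η ∧ f p ≤ ((p.2 p.1 + η : ℝ) : EReal) :=
    ⟨max 1 ((f p).toReal - p.2 p.1), by positivity, (EReal.le_coe_toReal hp).trans
      (EReal.coe_le_coe_iff.2 (by linarith [le_max_right 1 ((f p).toReal - p.2 p.1)]))⟩
  -- the `n`-th step works at scale `r n`, with `t` chosen so that the first step starts at `p`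
  set r : ℕ → ℝ := fun n => ε / 4 / 2 / 2 ^ n
  set t := 2 * η / (ε / 4 / 2) ^ 2
  have ht : 0 < t := by positivity
  have hr : Summable r := summable_geometric_two' _
  have hp₀ : f p ≤ ((p.2 p.1 + t * r 0 ^ 2 / 2 : ℝ) : EReal) := by
    convert hpη using 3
    simp only [t, r, pow_zero, div_one]
    field_simp
  obtain ⟨y, hy, hdist⟩ := hf.1.2.2.1.exists_eq_of_forall_exists_near
    (continuous_snd.clm_apply continuous_fst) hf.1.2.2.2
    (ε := fun n => t * r n ^ 2 / 2) (d := fun n => 2 * r n) (e := fun n => 2 * t * r n)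
    (by simpa using ((hr.tendsto_atTop_zero.pow 2).const_mul t).div_const 2)
    (hr.mul_left 2) (hr.mul_left (2 * t))
    (fun n p hp => hf.exists_near_coincidence ht (by positivity) hp (by positivity)
      (by simp only [r]; gcongr <;> norm_num))
    hp₀
  refine ⟨y.1, ⟨y.2, hy⟩, hdist.trans_lt ?_⟩
  rw [tsum_mul_left, tsum_geometric_two']
  linarith

theorem stmt18_general {E F : Type*} [NormedAddCommGroup E] [NormedSpace ℝ E] [CompleteSpace E] [NormedAddCommGroup F] [NormedSpace ℝ F] [CompleteSpace F]
    (A : E →L[ℝ] F) (f : E × StrongDual ℝ E → EReal) (g : F × StrongDual ℝ F → EReal)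
    (hf : IsStrongRep f) (hg : IsStrongRep g)
    (H : Submodule ℝ F) (hHc : IsClosed (H : Set F))
    (h1 : ∀ (y : F) (x : E), (Mgraph g y).Nonempty → (Mgraph f x).Nonempty →
      y - A x ∈ H)
    (h2 : (H : Set F) ⊆ {z : F | ∃ l : ℝ, 0 < l ∧ ∃ p : F × StrongDual ℝ F, g p ≠ ⊤ ∧
      ∃ q : E × StrongDual ℝ E, f q ≠ ⊤ ∧ z = l • (p.1 - A q.1)}) :
    {z : F | ∃ l : ℝ, 0 < l ∧ ∃ p : F × StrongDual ℝ F, g p ≠ ⊤ ∧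
      ∃ q : E × StrongDual ℝ E, f q ≠ ⊤ ∧ z = l • (p.1 - A q.1)} = (H : Set F) := by
  refine Subset.antisymm ?_ h2
  rintro _ ⟨l, -, p, hp, q, hq, rfl⟩
  refine H.smul_mem l ?_
  rw [← SetLike.mem_coe, ← hHc.closure_eq]
  exact map_mem_closure₂ (f := fun y x => y - A x) (by fun_prop)
    (hg.mem_closure_dom_Mgraph hp) (hf.mem_closure_dom_Mgraph hq) fun y hy x hx => h1 y x hy hx

theorem stmt18 {E F : Type*} [NormedAddCommGroup E] [NormedSpace ℝ E] [CompleteSpace E] [Nontrivial E] [NormedAddCommGroup F] [NormedSpace ℝ F] [CompleteSpace F] [Nontrivial F]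
    (A : E →L[ℝ] F) (f : E × StrongDual ℝ E → EReal) (g : F × StrongDual ℝ F → EReal)
    (hf : IsStrongRep f) (hg : IsStrongRep g)
    (H : Submodule ℝ F) (hHc : IsClosed (H : Set F))
    (h1 : ∀ (y : F) (x : E), (Mgraph g y).Nonempty → (Mgraph f x).Nonempty →
      y - A x ∈ H)
    (h2 : (H : Set F) ⊆ {z : F | ∃ l : ℝ, 0 < l ∧ ∃ p : F × StrongDual ℝ F, g p ≠ ⊤ ∧
      ∃ q : E × StrongDual ℝ E, f q ≠ ⊤ ∧ z = l • (p.1 - A q.1)}) :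
    {z : F | ∃ l : ℝ, 0 < l ∧ ∃ p : F × StrongDual ℝ F, g p ≠ ⊤ ∧
      ∃ q : E × StrongDual ℝ E, f q ≠ ⊤ ∧ z = l • (p.1 - A q.1)} = (H : Set F) :=
  stmt18_general A f g hf hg H hHc h1 h2
end
end
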